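/- arXiv:math/0505599 — 8 statements merged into one kernel-verified Lean document; each statement's English description precedes it below -/
import Mathlib

section
/- With S₂ᵉ := (1/n)∑_{j=1}^n (X̄₁^{(−j)} − X̄₂^{(−j)})(X̄₁^{(−j)} − X_{1j}), one has the identity S₂ᵉ = (n/(n−1)²)(σ̂₁² − ĉov). -/
/-- Leave-one-out mean: `(1/(n-1)) ∑_{k ≠ j} Y k`. -/
noncomputable def looMean (n : ℕ) (Y : Fin n → ℝ) (j : Fin n) : ℝ :=
  (1 / ((n : ℝ) - 1)) * ∑ k ∈ Finset.univ.erase j, Y k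

/-- Sample mean `(1/n) ∑_j Y j`. -/
noncomputable def sampleMean (n : ℕ) (Y : Fin n → ℝ) : ℝ :=
  (1 / (n : ℝ)) * ∑ j, Y j

/-- Sample covariance `(1/n) ∑_j (Y j − Ȳ)(Z j − Z̄)`. -/
noncomputable def sampleCov (n : ℕ) (Y Z : Fin n → ℝ) : ℝ :=
  (1 / (n : ℝ)) * ∑ j, (Y j - sampleMean n Y) * (Z j - sampleMean n Z)

/-- S₂ᵉ = (n/(n−1)²)(σ̂₁² − ĉov). -/
theorem stmt_1 (n : ℕ) (hn : 2 ≤ n) (X : Fin 2 → Fin n → ℝ) :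
    (1 / (n : ℝ)) * ∑ j : Fin n,
        (looMean n (X 0) j - looMean n (X 1) j) * (looMean n (X 0) j - X 0 j)
      = ((n : ℝ) / ((n : ℝ) - 1) ^ 2)
          * (sampleCov n (X 0) (X 0) - sampleCov n (X 0) (X 1)) := by
  have hn0 : (n : ℝ) ≠ 0 := by positivity
  have hn1 : (n : ℝ) - 1 ≠ 0 := by
    have : (2 : ℝ) ≤ (n : ℝ) := by exact_mod_cast hn
    linarith
  set a : Fin n → ℝ := X 0 with ha
  set b : Fin n → ℝ := X 1 with hb
  set A : ℝ := ∑ j, a j with hA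
  set B : ℝ := ∑ j, b j with hB
  set P : ℝ := ∑ j, a j * a j with hP
  set Q : ℝ := ∑ j, a j * b j with hQ
  have key : ∀ j : Fin n,
      (looMean n a j - looMean n b j) * (looMean n a j - a j)
        = (1 / ((n : ℝ) - 1) ^ 2) * ((A - B - a j + b j) * (A - (n : ℝ) * a j)) := by
    intro j
    unfold looMean
    rw [Finset.sum_erase_eq_sub (Finset.mem_univ j),
        Finset.sum_erase_eq_sub (Finset.mem_univ j)]
    field_simp
    ring
  have hsum : ∑ j, (looMean n a j - looMean n b j) * (looMean n a j - a j)
      = (1 / ((n : ℝ) - 1) ^ 2) *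
          ((n : ℝ) * P - (n : ℝ) * Q - A ^ 2 + A * B) := by
    rw [Finset.sum_congr rfl (fun j _ => key j), ← Finset.mul_sum]
    congr 1
    have expand : ∀ j : Fin n, (A - B - a j + b j) * (A - (n : ℝ) * a j)
        = (A ^ 2 - A * B) + ((-(n : ℝ) * (A - B) - A) * a j +
            (A * b j + ((n : ℝ) * (a j * a j) + (-(n : ℝ)) * (a j * b j)))) := by
      intro j; ring
    rw [Finset.sum_congr rfl (fun j _ => expand j)]
    simp only [Finset.sum_add_distrib, ← Finset.mul_sum, Finset.sum_const,
      Finset.card_univ, Fintype.card_fin, nsmul_eq_mul]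
    rw [← hA, ← hB, ← hP, ← hQ]
    ring
  have cov1 : sampleCov n a a = (1 / (n : ℝ)) * (P - A ^ 2 / (n : ℝ)) := by
    unfold sampleCov sampleMean
    rw [← hA]
    congr 1
    have expand : ∀ j : Fin n, (a j - 1 / (n : ℝ) * A) * (a j - 1 / (n : ℝ) * A)
        = a j * a j + ((-2 / (n : ℝ) * A) * a j + (A / n) ^ 2) := by
      intro j; field_simp; ring
    rw [Finset.sum_congr rfl (fun j _ => expand j)]
    simp only [Finset.sum_add_distrib, ← Finset.mul_sum, Finset.sum_const,
      Finset.card_univ, Fintype.card_fin, nsmul_eq_mul]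
    rw [← hA, ← hP]
    field_simp
    ring
  have cov2 : sampleCov n a b = (1 / (n : ℝ)) * (Q - A * B / (n : ℝ)) := by
    unfold sampleCov sampleMean
    rw [← hA, ← hB]
    congr 1
    have expand : ∀ j : Fin n, (a j - 1 / (n : ℝ) * A) * (b j - 1 / (n : ℝ) * B)
        = a j * b j + ((-B / (n : ℝ)) * a j + ((-A / (n : ℝ)) * b j + A * B / (n : ℝ) ^ 2)) := by
      intro j; field_simp; ring
    rw [Finset.sum_congr rfl (fun j _ => expand j)]
    simp only [Finset.sum_add_distrib, ← Finset.mul_sum, Finset.sum_const,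
      Finset.card_univ, Fintype.card_fin, nsmul_eq_mul]
    rw [← hA, ← hB, ← hQ]
    field_simp
    ring
  rw [hsum, cov1, cov2]
  field_simp
  ring
end

section
/- Assume the sample covariance matrix Σ̂ is invertible (so that A_e = (n/(n−1)²)Σ̂ + n θ̂θ̂ᵗ is positive definite). Then over the affine set {λ ∈ ℝ^m : ∑_{i=1}^m λ_i = 1}, the cross-validation discrepancy D_e^{(m)}(λ) = ∑_{j=1}^n (X_{1j} − ∑_{i=1}^m λ_i X̄_i^{(−j)})² attains its unique minimum at λ_e^{opt} = (1,0,…,0)ᵗ − e_n² ( A_e^{−1} Σ̂₁ − ((𝟙ᵗ A_e^{−1} Σ̂₁)/(𝟙ᵗ A_e^{−1} 𝟙)) A_e^{−1} 𝟙 ), where 𝟙 = (1,…,1)ᵗ ∈ ℝ^m and Σ̂₁ is the first column of Σ̂. -/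
/-!
Let `W` be the `n × m` matrix `W_{ji} = X̄_i^{(−j)}`, so that `D_e(λ) = ‖X₁ − Wλ‖²`,
`A_e = WᵀW` and `b_e = WᵀX₁`. Substituting `X̄_i^{(−j)} = X̄_i − (X_{ij} − X̄_i)/(n−1)` gives
`A_e = (n/(n−1)²) Σ̂ + n θ̂θ̂ᵗ` and `b_e = A_e e₁ − e_n² Σ̂₁`. Hence `A_e` is positive definite,
and `λ_e^{opt}` satisfies `∑ λ = 1` together with the Lagrange condition
`Wᵀ(Wλ − X₁) ∈ ℝ𝟙`. For any `λ` with `∑ λ = 1` the cross term then vanishes, so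
`D_e(λ) = D_e(λ_e^{opt}) + ‖W(λ − λ_e^{opt})‖²`, and the last term vanishes only at
`λ = λ_e^{opt}` because `WᵀW = A_e` is positive definite.
-/

open Matrix

/-- The matrix `A_e` with entries `(A_e)_{ik} = ∑_j X̄_i^{(−j)} X̄_k^{(−j)}`. -/
noncomputable def Ae (m n : ℕ) (X : Fin m → Fin n → ℝ) : Matrix (Fin m) (Fin m) ℝ :=
  fun i k => ∑ j : Fin n, looMean n (X i) j * looMean n (X k) j

/-- The sample covariance matrix `Σ̂`. -/
noncomputable def SigmaHat (m n : ℕ) (X : Fin m → Fin n → ℝ) : Matrix (Fin m) (Fin m) ℝ :=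
  fun i k => sampleCov n (X i) (X k)

/-- The cross-validation discrepancy `D_e^{(m)}(λ) = ∑ⱼ (X_{1j} − ∑ᵢ λᵢ X̄ᵢ^{(−j)})²`. -/
noncomputable def De (m n : ℕ) (hm : 0 < m) (X : Fin m → Fin n → ℝ) (l : Fin m → ℝ) : ℝ :=
  ∑ j : Fin n, (X ⟨0, hm⟩ j - ∑ i : Fin m, l i * looMean n (X i) j) ^ 2

/-- The optimum weight vector
`λ_e^{opt} = (1,0,…,0)ᵗ − e_n² ( A_e⁻¹ Σ̂₁ − ((𝟙ᵗ A_e⁻¹ Σ̂₁)/(𝟙ᵗ A_e⁻¹ 𝟙)) A_e⁻¹ 𝟙 )`. -/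
noncomputable def lamOpt (m n : ℕ) (hm : 0 < m) (X : Fin m → Fin n → ℝ) : Fin m → ℝ :=
  (fun i => if i = (⟨0, hm⟩ : Fin m) then (1 : ℝ) else 0)
    - ((n : ℝ) / ((n : ℝ) - 1)) ^ 2 •
        ((Ae m n X)⁻¹ *ᵥ (fun i => SigmaHat m n X i ⟨0, hm⟩)
          - (((fun _ => (1 : ℝ)) ⬝ᵥ ((Ae m n X)⁻¹ *ᵥ (fun i => SigmaHat m n X i ⟨0, hm⟩)))
              / ((fun _ => (1 : ℝ)) ⬝ᵥ ((Ae m n X)⁻¹ *ᵥ (fun _ => (1 : ℝ)))))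
            • ((Ae m n X)⁻¹ *ᵥ (fun _ => (1 : ℝ))))


lemma sum_sub_mul_sub_of_sum_eq_zero {ι : Type*} [Fintype ι] (a b c c' : ℝ) {d e : ι → ℝ}
    (hd : ∑ i, d i = 0) (he : ∑ i, e i = 0) :
    ∑ i, (a - c * d i) * (b - c' * e i)
      = Fintype.card ι * (a * b) + c * c' * ∑ i, d i * e i := by
  have expand : ∀ i, (a - c * d i) * (b - c' * e i)
      = a * b - c' * a * e i - c * b * d i + c * c' * (d i * e i) := fun i => by ring
  simp only [expand, Finset.sum_add_distrib, Finset.sum_sub_distrib, ← Finset.mul_sum, hd, he,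
    Finset.sum_const, Finset.card_univ, nsmul_eq_mul]
  ring

section SampleStatistics

variable {n : ℕ}

lemma sum_sub_sampleMean (Y : Fin n → ℝ) : ∑ j, (Y j - sampleMean n Y) = 0 := by
  rcases Nat.eq_zero_or_pos n with rfl | hn
  · simp
  · have : (n : ℝ) ≠ 0 := by positivity
    rw [Finset.sum_sub_distrib, sampleMean, Finset.sum_const, Finset.card_univ, Fintype.card_fin,
      nsmul_eq_mul]
    field_simp
    ring

lemma sum_mul_eq_mul_sampleCov (hn : n ≠ 0) (Y Z : Fin n → ℝ) :
    ∑ j, (Y j - sampleMean n Y) * (Z j - sampleMean n Z) = n * sampleCov n Y Z := by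
  rw [sampleCov, ← mul_assoc, mul_one_div_cancel (by exact_mod_cast hn), one_mul]

lemma looMean_eq_sampleMean_sub (hn : 1 < n) (Y : Fin n → ℝ) (j : Fin n) :
    looMean n Y j = sampleMean n Y - 1 / ((n : ℝ) - 1) * (Y j - sampleMean n Y) := by
  have : (n : ℝ) - 1 ≠ 0 := by
    have : (1 : ℝ) < n := by exact_mod_cast hn
    linarith
  rw [looMean, sampleMean, Finset.sum_erase_eq_sub (Finset.mem_univ j)]
  field_simp
  ring

lemma sampleCov_comm (Y Z : Fin n → ℝ) : sampleCov n Y Z = sampleCov n Z Y := by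
  simp only [sampleCov, mul_comm]

lemma sum_looMean_mul_looMean (hn : 1 < n) (Y Z : Fin n → ℝ) :
    ∑ j, looMean n Y j * looMean n Z j
      = n * (sampleMean n Y * sampleMean n Z) + n / ((n : ℝ) - 1) ^ 2 * sampleCov n Y Z := by
  simp only [looMean_eq_sampleMean_sub hn]
  rw [sum_sub_mul_sub_of_sum_eq_zero _ _ _ _ (sum_sub_sampleMean Y) (sum_sub_sampleMean Z),
    sum_mul_eq_mul_sampleCov (by omega), Fintype.card_fin]
  field_simp

lemma sum_looMean_mul (hn : 1 < n) (Y Z : Fin n → ℝ) :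
    ∑ j, looMean n Y j * Z j
      = n * (sampleMean n Y * sampleMean n Z) - n / ((n : ℝ) - 1) * sampleCov n Y Z := by
  have hZ : ∀ j, Z j = sampleMean n Z - (-1) * (Z j - sampleMean n Z) := fun j => by ring
  simp only [looMean_eq_sampleMean_sub hn]
  conv_lhs => enter [2, j, 2]; rw [hZ j]
  rw [sum_sub_mul_sub_of_sum_eq_zero _ _ _ _ (sum_sub_sampleMean Y) (sum_sub_sampleMean Z),
    sum_mul_eq_mul_sampleCov (by omega), Fintype.card_fin]
  ring

end SampleStatistics

section LeastSquares

variable {ι κ R : Type*} [Fintype ι] [Fintype κ]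

lemma dotProduct_sub_div_smul_eq_zero [Field R] {u p q : κ → R} (h : u ⬝ᵥ q ≠ 0) :
    u ⬝ᵥ (p - (u ⬝ᵥ p / u ⬝ᵥ q) • q) = 0 := by
  rw [dotProduct_sub, dotProduct_smul, smul_eq_mul, div_mul_cancel₀ _ h, sub_self]

lemma dotProduct_sub_mulVec_self_eq_add [CommRing R] (W : Matrix ι κ R) (x : ι → R)
    {v w : κ → R} {μ : R} (hw : Wᵀ *ᵥ (W *ᵥ w - x) = μ • 1) (hvw : ∑ k, v k = ∑ k, w k) :
    (x - W *ᵥ v) ⬝ᵥ (x - W *ᵥ v)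
      = (x - W *ᵥ w) ⬝ᵥ (x - W *ᵥ w) + W *ᵥ (v - w) ⬝ᵥ W *ᵥ (v - w) := by
  have orth : (x - W *ᵥ w) ⬝ᵥ W *ᵥ (v - w) = 0 := by
    rw [← neg_sub, neg_dotProduct, dotProduct_mulVec, ← mulVec_transpose, hw, smul_dotProduct,
      one_dotProduct, neg_eq_zero]
    simp [Finset.sum_sub_distrib, hvw]
  have split : x - W *ᵥ v = (x - W *ᵥ w) - W *ᵥ (v - w) := by
    rw [mulVec_sub]; abel
  rw [split]
  generalize x - W *ᵥ w = r at orth ⊢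
  simp only [sub_dotProduct, dotProduct_sub, dotProduct_comm _ r, orth]
  ring

lemma eq_zero_of_mulVec_eq_zero_of_posDef [CommRing R] [PartialOrder R] [StarRing R]
    [TrivialStar R] {W : Matrix ι κ R} (hW : (Wᵀ * W).PosDef) {v : κ → R} (h : W *ᵥ v = 0) :
    v = 0 := by
  by_contra hv
  have := hW.dotProduct_mulVec_pos hv
  rw [← mulVec_mulVec, h, mulVec_zero, dotProduct_zero] at this
  exact lt_irrefl _ this

end LeastSquares

section CrossValidation

variable {m n : ℕ}

noncomputable def looMeanMatrix (n : ℕ) (X : Fin m → Fin n → ℝ) : Matrix (Fin n) (Fin m) ℝ :=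
  Matrix.of fun j i => looMean n (X i) j

lemma Ae_eq_transpose_mul (X : Fin m → Fin n → ℝ) :
    Ae m n X = (looMeanMatrix n X)ᵀ * looMeanMatrix n X := by
  ext i k
  simp [Ae, looMeanMatrix, mul_apply]

lemma De_eq_dotProduct (hm : 0 < m) (X : Fin m → Fin n → ℝ) (l : Fin m → ℝ) :
    De m n hm X l
      = (X ⟨0, hm⟩ - looMeanMatrix n X *ᵥ l) ⬝ᵥ (X ⟨0, hm⟩ - looMeanMatrix n X *ᵥ l) := by
  simp [De, looMeanMatrix, mulVec, dotProduct, sq, mul_comm]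

lemma SigmaHat_eq_smul_transpose_mul (X : Fin m → Fin n → ℝ) :
    SigmaHat m n X = (1 / (n : ℝ)) •
      ((of fun j i => X i j - sampleMean n (X i))ᵀ * of fun j i => X i j - sampleMean n (X i)) := by
  ext i k
  simp [SigmaHat, sampleCov, mul_apply]

lemma SigmaHat_posDef (X : Fin m → Fin n → ℝ) (hinv : IsUnit (SigmaHat m n X).det) :
    (SigmaHat m n X).PosDef := by
  have hpsd : (SigmaHat m n X).PosSemidef := by
    rw [SigmaHat_eq_smul_transpose_mul, ← conjTranspose_eq_transpose_of_trivial]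
    exact (posSemidef_conjTranspose_mul_self _).smul (by positivity)
  exact hpsd.posDef_iff_det_ne_zero.mpr hinv.ne_zero

lemma Ae_eq_smul_SigmaHat_add (hn : 1 < n) (X : Fin m → Fin n → ℝ) :
    Ae m n X = ((n : ℝ) / ((n : ℝ) - 1) ^ 2) • SigmaHat m n X
      + (n : ℝ) • vecMulVec (fun i => sampleMean n (X i)) fun i => sampleMean n (X i) := by
  ext i k
  simp only [Ae, SigmaHat, sum_looMean_mul_looMean hn, vecMulVec, smul_of, Matrix.add_apply,
    Matrix.smul_apply, smul_eq_mul, of_apply, Pi.smul_apply]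
  ring

lemma Ae_posDef (hn : 1 < n) (X : Fin m → Fin n → ℝ) (hinv : IsUnit (SigmaHat m n X).det) :
    (Ae m n X).PosDef := by
  have hn' : (1 : ℝ) < n := by exact_mod_cast hn
  rw [Ae_eq_smul_SigmaHat_add hn]
  refine ((SigmaHat_posDef X hinv).smul (by positivity)).add_posSemidef ?_
  simpa using (posSemidef_vecMulVec_self_star fun i => sampleMean n (X i)).smul
    (by positivity : (0 : ℝ) ≤ n)

lemma transpose_looMeanMatrix_mulVec (hn : 1 < n) (X : Fin m → Fin n → ℝ) (k : Fin m) :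
    (looMeanMatrix n X)ᵀ *ᵥ X k
      = (Ae m n X).col k - ((n : ℝ) / ((n : ℝ) - 1)) ^ 2 • (SigmaHat m n X).col k := by
  have : (n : ℝ) - 1 ≠ 0 := by
    have : (1 : ℝ) < n := by exact_mod_cast hn
    linarith
  ext i
  simp only [Pi.sub_apply, col_apply, Pi.smul_apply, smul_eq_mul, Ae, SigmaHat,
    sum_looMean_mul_looMean hn]
  simp only [mulVec, dotProduct, transpose_apply, looMeanMatrix, of_apply, sum_looMean_mul hn]
  field_simp
  ring

lemma sum_lamOpt_eq_one (hm : 0 < m) (hn : 1 < n) (X : Fin m → Fin n → ℝ)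
    (hinv : IsUnit (SigmaHat m n X).det) : ∑ i, lamOpt m n hm X i = 1 := by
  have hq : (fun _ => (1 : ℝ)) ⬝ᵥ ((Ae m n X)⁻¹ *ᵥ fun _ => 1) ≠ 0 := by
    have hone : (fun _ => (1 : ℝ)) ≠ (0 : Fin m → ℝ) := fun h => by
      simpa using congrFun h ⟨0, hm⟩
    simpa using ((Ae_posDef hn X hinv).inv.dotProduct_mulVec_pos hone).ne'
  rw [← one_dotProduct]
  change (fun _ => (1 : ℝ)) ⬝ᵥ lamOpt m n hm X = 1
  rw [lamOpt, dotProduct_sub, dotProduct_smul, dotProduct_sub_div_smul_eq_zero hq]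
  simp [dotProduct]

lemma exists_lagrange_multiplier_lamOpt (hm : 0 < m) (hn : 1 < n) (X : Fin m → Fin n → ℝ)
    (hinv : IsUnit (SigmaHat m n X).det) :
    ∃ μ : ℝ, (looMeanMatrix n X)ᵀ *ᵥ (looMeanMatrix n X *ᵥ lamOpt m n hm X - X ⟨0, hm⟩)
      = μ • 1 := by
  have hA : IsUnit (Ae m n X).det :=
    (isUnit_iff_isUnit_det _).mp (Ae_posDef hn X hinv).isUnit
  rw [mulVec_sub, mulVec_mulVec, ← Ae_eq_transpose_mul, transpose_looMeanMatrix_mulVec hn, lamOpt,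
    mulVec_sub, mulVec_smul, mulVec_sub, mulVec_smul, mulVec_mulVec, mul_nonsing_inv _ hA,
    one_mulVec, mulVec_mulVec, mul_nonsing_inv _ hA, one_mulVec]
  set c := (fun _ => (1 : ℝ)) ⬝ᵥ ((Ae m n X)⁻¹ *ᵥ fun i => SigmaHat m n X i ⟨0, hm⟩)
    / (fun _ => (1 : ℝ)) ⬝ᵥ ((Ae m n X)⁻¹ *ᵥ fun _ => 1)
  refine ⟨((n : ℝ) / ((n : ℝ) - 1)) ^ 2 * c, ?_⟩
  ext i
  simp only [Pi.sub_apply, mulVec, dotProduct, mul_ite, mul_one, mul_zero, Finset.sum_ite_eq',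
    Finset.mem_univ, ↓reduceIte, Pi.smul_apply, smul_eq_mul, col_apply, sub_sub_sub_cancel_left,
    Pi.one_apply]
  ring

end CrossValidation

/-- If `Σ̂` is invertible, then over `{λ : ∑ᵢ λᵢ = 1}` the cross-validation discrepancy
attains its unique minimum at `λ_e^{opt}`. -/
theorem stmt_5 (m n : ℕ) (hm : 0 < m) (hn : 2 ≤ n) (X : Fin m → Fin n → ℝ)
    (hinv : IsUnit (SigmaHat m n X).det) :
    (∑ i : Fin m, lamOpt m n hm X i = 1)
      ∧ ∀ l : Fin m → ℝ, (∑ i : Fin m, l i = 1) →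
          De m n hm X (lamOpt m n hm X) ≤ De m n hm X l
          ∧ (De m n hm X l = De m n hm X (lamOpt m n hm X) → l = lamOpt m n hm X) := by
  have hsum := sum_lamOpt_eq_one hm hn X hinv
  obtain ⟨μ, hμ⟩ := exists_lagrange_multiplier_lamOpt hm hn X hinv
  refine ⟨hsum, fun l hl => ?_⟩
  have pythagoras := dotProduct_sub_mulVec_self_eq_add _ (X ⟨0, hm⟩) hμ (hl.trans hsum.symm)
  rw [← De_eq_dotProduct, ← De_eq_dotProduct] at pythagoras
  set d := looMeanMatrix n X *ᵥ (l - lamOpt m n hm X)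
  refine ⟨?_, fun heq => ?_⟩
  · rw [pythagoras]
    exact le_add_of_nonneg_right (Finset.sum_nonneg fun j _ => mul_self_nonneg (d j))
  · have hd : d = 0 := dotProduct_self_eq_zero.mp (by linarith)
    have hA := Ae_eq_transpose_mul X ▸ Ae_posDef hn X hinv
    exact sub_eq_zero.mp (eq_zero_of_mulVec_eq_zero_of_posDef hA hd)
end

section
/- Assume n₁(X̄₁ − X̄₂)² + (n₁/(n₁−1)²) σ̂₁² > 0. Then the delete-one-point cross-validation discrepancy D_u^{(2)}(λ) = ∑_{j=1}^{n₁} (X_{1j} − λ X̄₁^{(−j)} − (1−λ) X̄₂)² is uniquely minimized over λ ∈ ℝ at λ₁^{opt} = [n₁(X̄₁ − X̄₂)² − (n₁/(n₁−1)) σ̂₁²] / [n₁(X̄₁ − X̄₂)² + (n₁/(n₁−1)²) σ̂₁²]; moreover the denominator equals ∑_{j=1}^{n₁} (X̄₁^{(−j)} − X̄₂)² and the numerator equals ∑_{j=1}^{n₁} (X_{1j} − X̄₂)(X̄₁^{(−j)} − X̄₂). -/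
lemma sum_affine_sq (n : ℕ) (X : Fin n → ℝ) (a b : ℝ) :
    ∑ j : Fin n, (a * X j + b) ^ 2
      = a ^ 2 * (∑ j, (X j) ^ 2) + 2 * a * b * (∑ j, X j) + n * b ^ 2 := by
  have h : ∀ j : Fin n, (a * X j + b) ^ 2
      = a ^ 2 * (X j) ^ 2 + (2 * a * b) * X j + b ^ 2 := fun j => by ring
  simp_rw [h]
  rw [Finset.sum_add_distrib, Finset.sum_add_distrib, ← Finset.mul_sum, ← Finset.mul_sum,
    Finset.sum_const, Finset.card_univ, Fintype.card_fin, nsmul_eq_mul]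

lemma sum_affine_mul (n : ℕ) (X : Fin n → ℝ) (a b c d : ℝ) :
    ∑ j : Fin n, (a * X j + b) * (c * X j + d)
      = a * c * (∑ j, (X j) ^ 2) + (a * d + b * c) * (∑ j, X j) + n * (b * d) := by
  have h : ∀ j : Fin n, (a * X j + b) * (c * X j + d)
      = a * c * (X j) ^ 2 + (a * d + b * c) * X j + b * d := fun j => by ring
  simp_rw [h]
  rw [Finset.sum_add_distrib, Finset.sum_add_distrib, ← Finset.mul_sum, ← Finset.mul_sum,
    Finset.sum_const, Finset.card_univ, Fintype.card_fin, nsmul_eq_mul]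



/-- Sample variance `σ̂₁² = (1/n) ∑_j (Y j − Ȳ)²`. -/
noncomputable def sampleVar (n : ℕ) (Y : Fin n → ℝ) : ℝ :=
  (1 / (n : ℝ)) * ∑ j, (Y j - sampleMean n Y) ^ 2

/-- Delete-one-point cross-validation discrepancy
`D_u^{(2)}(λ) = ∑ⱼ (X_{1j} − λ X̄₁^{(−j)} − (1−λ) X̄₂)²`. -/
noncomputable def Du (n₁ : ℕ) (X : Fin n₁ → ℝ) (X2bar : ℝ) (l : ℝ) : ℝ :=
  ∑ j : Fin n₁, (X j - l * looMean n₁ X j - (1 - l) * X2bar) ^ 2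

/-- The delete-one-point discrepancy is uniquely minimized at
`λ₁^{opt} = [n₁(X̄₁ − X̄₂)² − (n₁/(n₁−1)) σ̂₁²] / [n₁(X̄₁ − X̄₂)² + (n₁/(n₁−1)²) σ̂₁²]`,
and the denominator equals `∑ⱼ (X̄₁^{(−j)} − X̄₂)²` while the numerator equals
`∑ⱼ (X_{1j} − X̄₂)(X̄₁^{(−j)} − X̄₂)`. -/
theorem stmt_6 (n₁ : ℕ) (hn : 2 ≤ n₁) (X : Fin n₁ → ℝ) (X2bar : ℝ)
    (hden : 0 < (n₁ : ℝ) * (sampleMean n₁ X - X2bar) ^ 2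
        + ((n₁ : ℝ) / ((n₁ : ℝ) - 1) ^ 2) * sampleVar n₁ X) :
    ((n₁ : ℝ) * (sampleMean n₁ X - X2bar) ^ 2
        + ((n₁ : ℝ) / ((n₁ : ℝ) - 1) ^ 2) * sampleVar n₁ X
      = ∑ j : Fin n₁, (looMean n₁ X j - X2bar) ^ 2)
    ∧ ((n₁ : ℝ) * (sampleMean n₁ X - X2bar) ^ 2
        - ((n₁ : ℝ) / ((n₁ : ℝ) - 1)) * sampleVar n₁ X
      = ∑ j : Fin n₁, (X j - X2bar) * (looMean n₁ X j - X2bar))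
    ∧ (∀ l : ℝ,
        Du n₁ X X2bar
            (((n₁ : ℝ) * (sampleMean n₁ X - X2bar) ^ 2
                - ((n₁ : ℝ) / ((n₁ : ℝ) - 1)) * sampleVar n₁ X)
              / ((n₁ : ℝ) * (sampleMean n₁ X - X2bar) ^ 2
                + ((n₁ : ℝ) / ((n₁ : ℝ) - 1) ^ 2) * sampleVar n₁ X))
          ≤ Du n₁ X X2bar l
        ∧ (Du n₁ X X2bar l =
            Du n₁ X X2bar
              (((n₁ : ℝ) * (sampleMean n₁ X - X2bar) ^ 2
                  - ((n₁ : ℝ) / ((n₁ : ℝ) - 1)) * sampleVar n₁ X)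
                / ((n₁ : ℝ) * (sampleMean n₁ X - X2bar) ^ 2
                  + ((n₁ : ℝ) / ((n₁ : ℝ) - 1) ^ 2) * sampleVar n₁ X))
            → l = ((n₁ : ℝ) * (sampleMean n₁ X - X2bar) ^ 2
                  - ((n₁ : ℝ) / ((n₁ : ℝ) - 1)) * sampleVar n₁ X)
                / ((n₁ : ℝ) * (sampleMean n₁ X - X2bar) ^ 2
                  + ((n₁ : ℝ) / ((n₁ : ℝ) - 1) ^ 2) * sampleVar n₁ X))) := by
  have hn2 : (2:ℝ) ≤ (n₁:ℝ) := by exact_mod_cast hn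
  have hnne : (n₁:ℝ) ≠ 0 := by linarith
  have hm : (n₁:ℝ) - 1 ≠ 0 := by intro h; linarith
  set S := ∑ j, X j with hS
  set Q := ∑ j : Fin n₁, (X j) ^ 2 with hQ
  have hmean : sampleMean n₁ X = S / (n₁:ℝ) := by
    unfold sampleMean; rw [← hS]; ring
  have hvar : sampleVar n₁ X = (1/(n₁:ℝ)) * (Q - S^2/(n₁:ℝ)) := by
    unfold sampleVar
    rw [hmean]
    have h : ∀ j : Fin n₁, (X j - S/(n₁:ℝ))^2 = (1 * X j + (-(S/(n₁:ℝ))))^2 := fun j => by ring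
    simp_rw [h]
    rw [sum_affine_sq, ← hS, ← hQ]
    field_simp
    ring
  have hloo : ∀ j : Fin n₁, looMean n₁ X j
      = (-1/((n₁:ℝ)-1)) * X j + S/((n₁:ℝ)-1) := by
    intro j
    unfold looMean
    rw [Finset.sum_erase_eq_sub (Finset.mem_univ j), ← hS]
    ring
  have eq1 : (n₁ : ℝ) * (sampleMean n₁ X - X2bar) ^ 2
        + ((n₁ : ℝ) / ((n₁ : ℝ) - 1) ^ 2) * sampleVar n₁ X
      = ∑ j : Fin n₁, (looMean n₁ X j - X2bar) ^ 2 := by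
    have h : ∀ j : Fin n₁, (looMean n₁ X j - X2bar)^2
        = ((-1/((n₁:ℝ)-1)) * X j + (S/((n₁:ℝ)-1) - X2bar))^2 := fun j => by rw [hloo]; ring
    simp_rw [h]
    rw [sum_affine_sq, ← hS, ← hQ, hmean, hvar]
    field_simp
    ring
  have eq2 : (n₁ : ℝ) * (sampleMean n₁ X - X2bar) ^ 2
        - ((n₁ : ℝ) / ((n₁ : ℝ) - 1)) * sampleVar n₁ X
      = ∑ j : Fin n₁, (X j - X2bar) * (looMean n₁ X j - X2bar) := by
    have h : ∀ j : Fin n₁, (X j - X2bar) * (looMean n₁ X j - X2bar)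
        = (1 * X j + (-X2bar)) * ((-1/((n₁:ℝ)-1)) * X j + (S/((n₁:ℝ)-1) - X2bar)) :=
      fun j => by rw [hloo]; ring
    simp_rw [h]
    rw [sum_affine_mul, ← hS, ← hQ, hmean, hvar]
    field_simp
    ring
  refine ⟨eq1, eq2, fun l => ?_⟩
  rw [eq1] at hden
  rw [eq1, eq2]
  set D := ∑ j : Fin n₁, (looMean n₁ X j - X2bar) ^ 2 with hD
  set Nv := ∑ j : Fin n₁, (X j - X2bar) * (looMean n₁ X j - X2bar) with hN
  set C := ∑ j : Fin n₁, (X j - X2bar) ^ 2 with hC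
  have hDne : D ≠ 0 := ne_of_gt hden
  have hDu : ∀ t : ℝ, Du n₁ X X2bar t = C - 2 * t * Nv + t^2 * D := by
    intro t
    unfold Du
    have h : ∀ j : Fin n₁, (X j - t * looMean n₁ X j - (1 - t) * X2bar)^2
        = (X j - X2bar)^2 - 2 * t * ((X j - X2bar) * (looMean n₁ X j - X2bar))
          + t^2 * (looMean n₁ X j - X2bar)^2 := fun j => by ring
    simp_rw [h]
    rw [Finset.sum_add_distrib, Finset.sum_sub_distrib, ← Finset.mul_sum, ← Finset.mul_sum,
      ← hC, ← hN, ← hD]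
  have key : ∀ t : ℝ, Du n₁ X X2bar t
      = Du n₁ X X2bar (Nv / D) + D * (t - Nv / D)^2 := by
    intro t
    rw [hDu, hDu]
    field_simp
    ring
  constructor
  · rw [key l]
    nlinarith [sq_nonneg (l - Nv / D), hden]
  · intro heq
    rw [key l] at heq
    have h0 : D * (l - Nv / D)^2 = 0 := by linarith
    have h1 : (l - Nv / D)^2 = 0 := by
      rcases mul_eq_zero.mp h0 with h | h
      · exact absurd h hDne
      · exact h
    have := pow_eq_zero_iff (n := 2) (by norm_num) |>.mp h1
    linarith [this]
end

section
/- If ρ < σ₁/σ₂, then P(λ₂^{opt}(n) > 0) → 1 as n → ∞. -/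
open MeasureTheory ProbabilityTheory Filter

/-- Leave-one-out mean from the first `n` observations, deleting the `j`-th one. -/
noncomputable def looM {Ω : Type*} (Y : ℕ → Ω → ℝ) (n j : ℕ) (ω : Ω) : ℝ :=
  (1 / ((n : ℝ) - 1)) * ∑ k ∈ (Finset.range n).erase j, Y k ω

/-- `S₁ᵉ = (1/n) ∑ⱼ (X̄₁^{(−j)} − X̄₂^{(−j)})²`. -/
noncomputable def S1e {Ω : Type*} (Y1 Y2 : ℕ → Ω → ℝ) (n : ℕ) (ω : Ω) : ℝ :=
  (1 / (n : ℝ)) * ∑ j ∈ Finset.range n, (looM Y1 n j ω - looM Y2 n j ω) ^ 2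

/-- `S₂ᵉ = (1/n) ∑ⱼ (X̄₁^{(−j)} − X̄₂^{(−j)})(X̄₁^{(−j)} − X_{1j})`. -/
noncomputable def S2e {Ω : Type*} (Y1 Y2 : ℕ → Ω → ℝ) (n : ℕ) (ω : Ω) : ℝ :=
  (1 / (n : ℝ)) * ∑ j ∈ Finset.range n,
    (looM Y1 n j ω - looM Y2 n j ω) * (looM Y1 n j ω - Y1 j ω)

/-- The cross-validated weight `λ₂^{opt}(n) = S₂ᵉ/S₁ᵉ` (junk value when `S₁ᵉ = 0`). -/
noncomputable def lam2opt {Ω : Type*} (Y1 Y2 : ℕ → Ω → ℝ) (n : ℕ) (ω : Ω) : ℝ :=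
  S2e Y1 Y2 n ω / S1e Y1 Y2 n ω

/-!
Expanding the leave-one-out means gives `S₂ᵉ = n/(n-1)² · ĉov(X₁, X₁ - X₂)` with `ĉov` the
empirical covariance, which by the strong law tends almost surely to
`cov(X₁, X₁ - X₂) = σ₁² - ρσ₁σ₂ > 0`. Since `S₁ᵉ ≥ 0` vanishes only if every summand of `S₂ᵉ` does,
`λ₂ = S₂ᵉ/S₁ᵉ` is eventually positive almost surely, and events that almost surely hold eventually
have probabilities tending to one.
-/

open Finset
open scoped Topology

noncomputable def empMean (a : ℕ → ℝ) (n : ℕ) : ℝ :=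
  (n : ℝ)⁻¹ * ∑ i ∈ range n, a i

noncomputable def empCov (a b : ℕ → ℝ) (n : ℕ) : ℝ :=
  empMean (fun i => a i * b i) n - empMean a n * empMean b n

section Algebra

variable {Ω : Type*} (Y1 Y2 : ℕ → Ω → ℝ) (ω : Ω) {n : ℕ}

lemma looM_sub (n j : ℕ) :
    looM Y1 n j ω - looM Y2 n j ω = looM (fun k ω => Y1 k ω - Y2 k ω) n j ω := by
  simp only [looM, sum_sub_distrib, mul_sub]

lemma looM_eq_of_mem {Y : ℕ → Ω → ℝ} {j : ℕ} (hj : j ∈ range n) :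
    looM Y n j ω = (∑ k ∈ range n, Y k ω - Y j ω) / ((n : ℝ) - 1) := by
  rw [looM, sum_erase_eq_sub hj, one_div_mul_eq_div]

/-- With `a = Y1`, `d = Y1 - Y2` and totals `A`, `D`, the `j`-th summand of `S₂ᵉ` is
`(D - dⱼ)(A - n aⱼ)/(n-1)²`, and these sum to `(n ∑ aⱼ dⱼ - A D)/(n-1)²`. -/
lemma S2e_eq_mul_empCov (hn : 2 ≤ n) :
    S2e Y1 Y2 n ω = (n : ℝ) / ((n : ℝ) - 1) ^ 2 *
      empCov (fun j => Y1 j ω) (fun j => Y1 j ω - Y2 j ω) n := by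
  have h2n : (2 : ℝ) ≤ n := by exact_mod_cast hn
  have hn0 : (n : ℝ) ≠ 0 := by linarith
  have hn1 : (n : ℝ) - 1 ≠ 0 := by linarith
  set a : ℕ → ℝ := fun j => Y1 j ω
  set d : ℕ → ℝ := fun j => Y1 j ω - Y2 j ω
  have hterm : ∀ j ∈ range n, (looM Y1 n j ω - looM Y2 n j ω) * (looM Y1 n j ω - Y1 j ω) =
      (∑ k ∈ range n, d k - d j) * (∑ k ∈ range n, a k - n * a j) / ((n : ℝ) - 1) ^ 2 := by
    intro j hj
    rw [looM_sub, looM_eq_of_mem _ hj, looM_eq_of_mem _ hj]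
    field_simp
    ring
  have hsum : ∑ j ∈ range n, (∑ k ∈ range n, d k - d j) * (∑ k ∈ range n, a k - n * a j) =
      n * ∑ j ∈ range n, a j * d j - (∑ k ∈ range n, a k) * ∑ k ∈ range n, d k := by
    simp only [sub_mul, mul_sub, sum_sub_distrib, sum_const, card_range, nsmul_eq_mul,
      ← mul_sum, ← sum_mul]
    simp only [mul_left_comm (d _) (n : ℝ), ← mul_sum, mul_comm (d _) (a _)]
    ring
  rw [S2e, sum_congr rfl hterm, ← sum_div, hsum, empCov, empMean, empMean, empMean]
  field_simp

lemma S1e_nonneg : 0 ≤ S1e Y1 Y2 n ω :=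
  mul_nonneg (by positivity) (sum_nonneg fun _ _ => sq_nonneg _)

lemma S2e_eq_zero_of_S1e_eq_zero (h : S1e Y1 Y2 n ω = 0) : S2e Y1 Y2 n ω = 0 := by
  rcases mul_eq_zero.1 h with hn | hsum
  · rw [S2e, hn, zero_mul]
  · have hzero := (sum_eq_zero_iff_of_nonneg fun _ _ => sq_nonneg _).1 hsum
    rw [S2e, sum_eq_zero fun j hj => by rw [pow_eq_zero_iff two_ne_zero |>.1 (hzero j hj),
      zero_mul], mul_zero]

lemma lam2opt_pos_of_S2e_pos (h : 0 < S2e Y1 Y2 n ω) : 0 < lam2opt Y1 Y2 n ω :=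
  div_pos h <| (S1e_nonneg Y1 Y2 ω).lt_of_ne fun h0 =>
    h.ne' (S2e_eq_zero_of_S1e_eq_zero Y1 Y2 ω h0.symm)

lemma lam2opt_pos_of_empCov_pos (hn : 2 ≤ n)
    (h : 0 < empCov (fun j => Y1 j ω) (fun j => Y1 j ω - Y2 j ω) n) :
    0 < lam2opt Y1 Y2 n ω := by
  have hn1 : (1 : ℝ) < n := by exact_mod_cast hn
  refine lam2opt_pos_of_S2e_pos Y1 Y2 ω ?_
  rw [S2e_eq_mul_empCov Y1 Y2 ω hn]
  exact mul_pos (div_pos (by linarith) (by nlinarith)) h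

end Algebra

lemma measurable_lam2opt {Ω : Type*} [MeasurableSpace Ω] {Y1 Y2 : ℕ → Ω → ℝ}
    (h1 : ∀ j, Measurable (Y1 j)) (h2 : ∀ j, Measurable (Y2 j)) (n : ℕ) :
    Measurable (lam2opt Y1 Y2 n) := by
  unfold lam2opt S2e S1e looM
  fun_prop

section StrongLaw

variable {Ω E : Type*} [MeasurableSpace Ω] [MeasurableSpace E] {μ : Measure Ω}
  {X : ℕ → Ω → E}

lemma ae_tendsto_empMean_comp (hindep : Pairwise fun i j => IndepFun (X i) (X j) μ)
    (hident : ∀ i, IdentDistrib (X i) (X 0) μ μ) {g : E → ℝ} (hg : Measurable g)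
    (hint : Integrable (g ∘ X 0) μ) :
    ∀ᵐ ω ∂μ, Tendsto (fun n => empMean (fun i => g (X i ω)) n) atTop (𝓝 μ[g ∘ X 0]) := by
  simpa only [empMean, smul_eq_mul, Function.comp_apply] using
    strong_law_ae (μ := μ) (fun i => g ∘ X i) hint (fun i j hij => (hindep hij).comp hg hg)
      fun i => (hident i).comp hg

lemma ae_tendsto_empCov_comp [IsProbabilityMeasure μ]
    (hindep : Pairwise fun i j => IndepFun (X i) (X j) μ)
    (hident : ∀ i, IdentDistrib (X i) (X 0) μ μ) {f g : E → ℝ} (hf : Measurable f)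
    (hg : Measurable g) (hf2 : MemLp (f ∘ X 0) 2 μ) (hg2 : MemLp (g ∘ X 0) 2 μ) :
    ∀ᵐ ω ∂μ, Tendsto (fun n => empCov (fun i => f (X i ω)) (fun i => g (X i ω)) n) atTop
      (𝓝 cov[f ∘ X 0, g ∘ X 0; μ]) := by
  filter_upwards [ae_tendsto_empMean_comp hindep hident (hf.mul hg) (hf2.integrable_mul hg2),
    ae_tendsto_empMean_comp hindep hident hf (hf2.integrable one_le_two),
    ae_tendsto_empMean_comp hindep hident hg (hg2.integrable one_le_two)] with ω hfg hf' hg'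
  rw [covariance_eq_sub hf2 hg2]
  exact hfg.sub (hf'.mul hg')

end StrongLaw

theorem stmt_8_general {Ω : Type*} [MeasurableSpace Ω] (μ : Measure Ω) [IsProbabilityMeasure μ]
    (X : ℕ → Ω → ℝ × ℝ) (hmeas : ∀ j, Measurable (X j))
    (hindep : iIndepFun X μ)
    (hident : ∀ j, IdentDistrib (X j) (X 0) μ μ)
    (hL2a : MemLp (fun ω => (X 0 ω).1) 2 μ)
    (hL2b : MemLp (fun ω => (X 0 ω).2) 2 μ)
    (θ1 θ2 σ1 σ2 ρ : ℝ)
    (hθ1 : θ1 = ∫ ω, (X 0 ω).1 ∂μ) (hθ2 : θ2 = ∫ ω, (X 0 ω).2 ∂μ)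
    (hσ1 : σ1 ^ 2 = variance (fun ω => (X 0 ω).1) μ)
    (hσ1pos : 0 < σ1) (hσ2pos : 0 < σ2)
    (hρ : ρ * (σ1 * σ2) = ∫ ω, ((X 0 ω).1 - θ1) * ((X 0 ω).2 - θ2) ∂μ)
    (hcond : ρ < σ1 / σ2) :
    Tendsto
      (fun n => μ {ω | 0 < lam2opt (fun j ω => (X j ω).1) (fun j ω => (X j ω).2) n ω})
      atTop (nhds 1) := by
  have hcov : cov[(fun p : ℝ × ℝ => p.1) ∘ X 0, (fun p : ℝ × ℝ => p.1 - p.2) ∘ X 0; μ] =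
      σ1 ^ 2 - ρ * (σ1 * σ2) := by
    rw [Function.comp_def, Function.comp_def, covariance_fun_sub_right hL2a hL2a hL2b,
      covariance_self hL2a.aemeasurable, ← hσ1, hρ, hθ1, hθ2]
    rfl
  have hpos : 0 < σ1 ^ 2 - ρ * (σ1 * σ2) := by
    have hσ1ρ : 0 < σ1 - ρ * σ2 := sub_pos.2 ((lt_div_iff₀ hσ2pos).1 hcond)
    linear_combination mul_pos hσ1pos hσ1ρ
  have hae : ∀ᵐ ω ∂μ, ∀ᶠ n in atTop,
      0 < lam2opt (fun j ω => (X j ω).1) (fun j ω => (X j ω).2) n ω := by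
    filter_upwards [ae_tendsto_empCov_comp (f := fun p => p.1) (g := fun p => p.1 - p.2)
      (fun i j hij => hindep.indepFun hij) hident (by fun_prop) (by fun_prop) hL2a
      (hL2a.sub hL2b)] with ω hω
    rw [hcov] at hω
    filter_upwards [hω.eventually_const_lt hpos, eventually_ge_atTop 2] with n hcovn hn
    exact lam2opt_pos_of_empCov_pos _ _ ω hn hcovn
  have hmeasSet (n : ℕ) : MeasurableSet
      {ω | 0 < lam2opt (fun j ω => (X j ω).1) (fun j ω => (X j ω).2) n ω} :=
    measurableSet_lt measurable_const
      (measurable_lam2opt (fun j => (hmeas j).fst) (fun j => (hmeas j).snd) n)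
  rw [← measure_univ (μ := μ)]
  exact tendsto_measure_of_ae_tendsto_indicator_of_isFiniteMeasure atTop MeasurableSet.univ
    hmeasSet (by simpa only [Set.mem_ofPred_eq, Set.mem_univ, iff_true])

/-- If `ρ < σ₁/σ₂`, then `P(λ₂^{opt}(n) > 0) → 1` as `n → ∞`. -/
theorem stmt_8 {Ω : Type*} [MeasurableSpace Ω] (μ : Measure Ω) [IsProbabilityMeasure μ]
    (X : ℕ → Ω → ℝ × ℝ) (hmeas : ∀ j, Measurable (X j))
    (hindep : iIndepFun X μ)
    (hident : ∀ j, IdentDistrib (X j) (X 0) μ μ)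
    (hL2a : MemLp (fun ω => (X 0 ω).1) 2 μ)
    (hL2b : MemLp (fun ω => (X 0 ω).2) 2 μ)
    (θ1 θ2 σ1 σ2 ρ : ℝ)
    (hθ1 : θ1 = ∫ ω, (X 0 ω).1 ∂μ) (hθ2 : θ2 = ∫ ω, (X 0 ω).2 ∂μ)
    (hσ1 : σ1 ^ 2 = variance (fun ω => (X 0 ω).1) μ)
    (hσ2 : σ2 ^ 2 = variance (fun ω => (X 0 ω).2) μ)
    (hσ1pos : 0 < σ1) (hσ2pos : 0 < σ2)
    (hρ : ρ * (σ1 * σ2) = ∫ ω, ((X 0 ω).1 - θ1) * ((X 0 ω).2 - θ2) ∂μ)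
    (hcond : ρ < σ1 / σ2) :
    Tendsto
      (fun n => μ {ω | 0 < lam2opt (fun j ω => (X j ω).1) (fun j ω => (X j ω).2) n ω})
      atTop (nhds 1) :=
  stmt_8_general μ X hmeas hindep hident hL2a hL2b θ1 θ2 σ1 σ2 ρ hθ1 hθ2 hσ1 hσ1pos hσ2pos hρ hcond
end

section
/- If θ₁⁰ ≠ θ₂⁰, then λ₁^{opt} → 1 and λ₂^{opt} → 0 in probability as n₁ → ∞ and n₂ → ∞ (along any sequence of pairs (n₁, n₂) with both sample sizes tending to infinity). -/
/-!
By the strong law of large numbers, `X̄₁ → θ₁`, `X̄₂ → θ₂` and `σ̂₁² → Var X₁₁` almost surely.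
Since `X̄₁^{(−j)} = X̄₁ + (X̄₁ − X_{1j})/(n₁ − 1)`, the cross-validation denominator equals
`n₁ (X̄₁ − X̄₂)² + n₁ σ̂₁² / (n₁ − 1)²`, so with `d = X̄₁ − X̄₂` and `ε = 1/(n₁ − 1)` we get
`λ₁^{opt} = (d² − σ̂₁² ε) / (d² + σ̂₁² ε²)`. As `d² → (θ₁ − θ₂)² ≠ 0` and `ε → 0`, this tends to `1`
almost surely, hence in probability.
-/

open MeasureTheory ProbabilityTheory Filter

/-- Sample mean of the first `n` observations. -/
noncomputable def sampleM {Ω : Type*} (Y : ℕ → Ω → ℝ) (n : ℕ) (ω : Ω) : ℝ :=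
  (1 / (n : ℝ)) * ∑ j ∈ Finset.range n, Y j ω

/-- Sample variance `σ̂₁²` of the first `n₁` observations. -/
noncomputable def sampleV {Ω : Type*} (Y : ℕ → Ω → ℝ) (n : ℕ) (ω : Ω) : ℝ :=
  (1 / (n : ℝ)) * ∑ j ∈ Finset.range n, (Y j ω - sampleM Y n ω) ^ 2

/-- The delete-one-point cross-validated weight
`λ₁^{opt} = [n₁(X̄₁ − X̄₂)² − (n₁/(n₁−1)) σ̂₁²] / ∑ⱼ (X̄₁^{(−j)} − X̄₂)²`
(junk value when the denominator is `0`). -/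
noncomputable def lam1u {Ω : Type*} (Y1 Y2 : ℕ → Ω → ℝ) (n1 n2 : ℕ) (ω : Ω) : ℝ :=
  ((n1 : ℝ) * (sampleM Y1 n1 ω - sampleM Y2 n2 ω) ^ 2
      - ((n1 : ℝ) / ((n1 : ℝ) - 1)) * sampleV Y1 n1 ω)
    / ∑ j ∈ Finset.range n1, (looM Y1 n1 j ω - sampleM Y2 n2 ω) ^ 2

open Finset Function
open scoped Topology

section Algebra

variable {Ω : Type*} (Y : ℕ → Ω → ℝ) (ω : Ω)

lemma sampleM_eq_sum_div (n : ℕ) : sampleM Y n ω = (∑ j ∈ range n, Y j ω) / n := by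
  rw [sampleM, one_div, inv_mul_eq_div]

lemma sum_eq_mul_sampleM {n : ℕ} (hn : n ≠ 0) : ∑ j ∈ range n, Y j ω = n * sampleM Y n ω := by
  rw [sampleM_eq_sum_div, mul_div_cancel₀ _ (Nat.cast_ne_zero.2 hn)]

lemma sum_sub_sampleM {n : ℕ} (hn : n ≠ 0) : ∑ j ∈ range n, (Y j ω - sampleM Y n ω) = 0 := by
  rw [sum_sub_distrib, sum_const, card_range, nsmul_eq_mul, sum_eq_mul_sampleM Y ω hn, sub_self]

lemma sum_sq_sub_sampleM {n : ℕ} (hn : n ≠ 0) :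
    ∑ j ∈ range n, (Y j ω - sampleM Y n ω) ^ 2 = n * sampleV Y n ω := by
  rw [sampleV, ← mul_assoc, mul_one_div_cancel (Nat.cast_ne_zero.2 hn), one_mul]

lemma sampleV_eq_sub_sq {n : ℕ} (hn : n ≠ 0) :
    sampleV Y n ω = (∑ j ∈ range n, Y j ω ^ 2) / n - sampleM Y n ω ^ 2 := by
  have hn' : (n : ℝ) ≠ 0 := Nat.cast_ne_zero.2 hn
  have hexpand : ∑ j ∈ range n, (Y j ω - sampleM Y n ω) ^ 2
      = ∑ j ∈ range n, Y j ω ^ 2 - n * sampleM Y n ω ^ 2 := by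
    simp only [sub_sq, sum_add_distrib, sum_sub_distrib, ← sum_mul, ← mul_sum, sum_const,
      card_range, nsmul_eq_mul, sum_eq_mul_sampleM Y ω hn]
    ring
  rw [eq_sub_iff_add_eq, ← mul_right_inj' hn', mul_add, ← sum_sq_sub_sampleM Y ω hn, hexpand]
  field_simp
  ring

lemma looM_eq_sampleM_add {n j : ℕ} (hj : j < n) (hn : 2 ≤ n) :
    looM Y n j ω = sampleM Y n ω + (sampleM Y n ω - Y j ω) * ((n : ℝ) - 1)⁻¹ := by
  have hn1 : (n : ℝ) - 1 ≠ 0 := by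
    have : (2 : ℝ) ≤ n := by exact_mod_cast hn
    linarith
  rw [looM, sum_erase_eq_sub (mem_range.2 hj), sum_eq_mul_sampleM Y ω (by omega)]
  field_simp
  ring

lemma sum_sq_looM_sub {n : ℕ} (hn : 2 ≤ n) (c : ℝ) :
    ∑ j ∈ range n, (looM Y n j ω - c) ^ 2
      = n * (sampleM Y n ω - c) ^ 2 + n * ((n : ℝ) - 1)⁻¹ ^ 2 * sampleV Y n ω := by
  set M := sampleM Y n ω
  set e := ((n : ℝ) - 1)⁻¹
  calc ∑ j ∈ range n, (looM Y n j ω - c) ^ 2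
      = ∑ j ∈ range n, ((M - c) ^ 2 - 2 * (M - c) * e * (Y j ω - M) + (Y j ω - M) ^ 2 * e ^ 2) :=
        sum_congr rfl fun j hj => by rw [looM_eq_sampleM_add Y ω (mem_range.1 hj) hn]; ring
    _ = n * (M - c) ^ 2 - 2 * (M - c) * e * ∑ j ∈ range n, (Y j ω - M)
          + (∑ j ∈ range n, (Y j ω - M) ^ 2) * e ^ 2 := by
        rw [sum_add_distrib, sum_sub_distrib, sum_const, card_range, nsmul_eq_mul, ← mul_sum,
          ← sum_mul]
    _ = n * (M - c) ^ 2 + n * e ^ 2 * sampleV Y n ω := by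
        rw [sum_sub_sampleM Y ω (by omega), sum_sq_sub_sampleM Y ω (by omega)]
        ring

lemma lam1u_eq (Y' : ℕ → Ω → ℝ) {n : ℕ} (m : ℕ) (hn : 2 ≤ n) :
    lam1u Y Y' n m ω =
      ((sampleM Y n ω - sampleM Y' m ω) ^ 2 - sampleV Y n ω * ((n : ℝ) - 1)⁻¹)
        / ((sampleM Y n ω - sampleM Y' m ω) ^ 2 + sampleV Y n ω * ((n : ℝ) - 1)⁻¹ ^ 2) := by
  have hn' : (n : ℝ) ≠ 0 := Nat.cast_ne_zero.2 (by omega)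
  set d := sampleM Y n ω - sampleM Y' m ω
  set e := ((n : ℝ) - 1)⁻¹
  have hnum : n * d ^ 2 - n / ((n : ℝ) - 1) * sampleV Y n ω = n * (d ^ 2 - sampleV Y n ω * e) := by
    rw [div_eq_mul_inv]; ring
  have hden : n * d ^ 2 + n * e ^ 2 * sampleV Y n ω = n * (d ^ 2 + sampleV Y n ω * e ^ 2) := by
    ring
  rw [lam1u, sum_sq_looM_sub Y ω hn, hnum, hden, mul_div_mul_left _ _ hn']

end Algebra

lemma tendsto_sq_sub_mul_div_sq_add_mul_sq {ι : Type*} {l : Filter ι} {a v e : ι → ℝ}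
    {d V : ℝ} (hd : d ≠ 0) (ha : Tendsto a l (𝓝 d)) (hv : Tendsto v l (𝓝 V))
    (he : Tendsto e l (𝓝 0)) :
    Tendsto (fun k => (a k ^ 2 - v k * e k) / (a k ^ 2 + v k * e k ^ 2)) l (𝓝 1) := by
  have hlim : Tendsto (fun k => (a k ^ 2 - v k * e k) / (a k ^ 2 + v k * e k ^ 2)) l
      (𝓝 ((d ^ 2 - V * 0) / (d ^ 2 + V * 0 ^ 2))) :=
    ((ha.pow 2).sub (hv.mul he)).div ((ha.pow 2).add (hv.mul (he.pow 2))) (by simpa using hd)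
  rwa [zero_pow two_ne_zero, mul_zero, sub_zero, add_zero, div_self (pow_ne_zero 2 hd)] at hlim

lemma tendsto_lam1u_of_tendsto {Ω ι : Type*} {Y1 Y2 : ℕ → Ω → ℝ} {ω : Ω} {θ1 θ2 V : ℝ}
    (hne : θ1 ≠ θ2) (h1 : Tendsto (fun n => sampleM Y1 n ω) atTop (𝓝 θ1))
    (h2 : Tendsto (fun n => sampleM Y2 n ω) atTop (𝓝 θ2))
    (hV : Tendsto (fun n => sampleV Y1 n ω) atTop (𝓝 V))
    {l : Filter ι} {N1 N2 : ι → ℕ} (hN1 : Tendsto N1 l atTop) (hN2 : Tendsto N2 l atTop) :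
    Tendsto (fun k => lam1u Y1 Y2 (N1 k) (N2 k) ω) l (𝓝 1) := by
  have he : Tendsto (fun k => ((N1 k : ℝ) - 1)⁻¹) l (𝓝 0) := by
    have hsub : Tendsto (fun n : ℕ => (n : ℝ) - 1) atTop atTop := by
      simpa only [← sub_eq_add_neg] using
        tendsto_atTop_add_const_right _ (-1 : ℝ) tendsto_natCast_atTop_atTop
    exact tendsto_inv_atTop_zero.comp (hsub.comp hN1)
  refine (tendsto_sq_sub_mul_div_sq_add_mul_sq (sub_ne_zero.2 hne)
    ((h1.comp hN1).sub (h2.comp hN2)) (hV.comp hN1) he).congr' ?_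
  filter_upwards [hN1.eventually_ge_atTop 2] with k hk
  exact (lam1u_eq Y1 ω Y2 (N2 k) hk).symm

section Probability

variable {Ω : Type*} [MeasurableSpace Ω] {μ : Measure Ω} {Y : ℕ → Ω → ℝ}

lemma ae_tendsto_sampleM (hint : Integrable (Y 0) μ) (hindep : Pairwise ((· ⟂ᵢ[μ] ·) on Y))
    (hident : ∀ i, IdentDistrib (Y i) (Y 0) μ μ) :
    ∀ᵐ ω ∂μ, Tendsto (fun n => sampleM Y n ω) atTop (𝓝 μ[Y 0]) := by
  simpa only [sampleM_eq_sum_div] using strong_law_ae_real Y hint hindep hident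

lemma ae_tendsto_sampleV [IsProbabilityMeasure μ] (hY : MemLp (Y 0) 2 μ)
    (hindep : Pairwise ((· ⟂ᵢ[μ] ·) on Y)) (hident : ∀ i, IdentDistrib (Y i) (Y 0) μ μ) :
    ∀ᵐ ω ∂μ, Tendsto (fun n => sampleV Y n ω) atTop (𝓝 Var[Y 0; μ]) := by
  have hsq : Measurable fun x : ℝ => x ^ 2 := by fun_prop
  have hsecond := strong_law_ae_real (fun j ω => Y j ω ^ 2) hY.integrable_sq
    (fun i j hij => (hindep hij).comp hsq hsq) (fun j => (hident j).comp hsq)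
  filter_upwards [hsecond, ae_tendsto_sampleM (hY.integrable one_le_two) hindep hident]
    with ω hsecond hfirst
  rw [variance_eq_sub hY]
  refine (hsecond.sub (hfirst.pow 2)).congr' ?_
  filter_upwards [eventually_ne_atTop 0] with n hn
  exact (sampleV_eq_sub_sq Y ω hn).symm

lemma aemeasurable_lam1u {Y' : ℕ → Ω → ℝ} (h : ∀ j, AEMeasurable (Y j) μ)
    (h' : ∀ j, AEMeasurable (Y' j) μ) (n m : ℕ) : AEMeasurable (lam1u Y Y' n m) μ := by
  unfold lam1u looM sampleV sampleM
  fun_prop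

end Probability

theorem stmt_11_general {Ω : Type*} [MeasurableSpace Ω] (μ : Measure Ω) [IsProbabilityMeasure μ]
    (X1 X2 : ℕ → Ω → ℝ)
    (hindep1 : iIndepFun X1 μ)
    (hindep2 : iIndepFun X2 μ)
    (hident1 : ∀ j, IdentDistrib (X1 j) (X1 0) μ μ)
    (hident2 : ∀ j, IdentDistrib (X2 j) (X2 0) μ μ)
    (hL2a : MemLp (X1 0) 2 μ) (hL2b : MemLp (X2 0) 2 μ)
    (θ1 θ2 : ℝ) (hθ1 : θ1 = ∫ ω, X1 0 ω ∂μ) (hθ2 : θ2 = ∫ ω, X2 0 ω ∂μ)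
    (hne : θ1 ≠ θ2) :
    ∀ N1 N2 : ℕ → ℕ, Tendsto N1 atTop atTop → Tendsto N2 atTop atTop →
      TendstoInMeasure μ (fun k => lam1u X1 X2 (N1 k) (N2 k)) atTop (fun _ => (1 : ℝ))
      ∧ TendstoInMeasure μ (fun k ω => 1 - lam1u X1 X2 (N1 k) (N2 k) ω) atTop
          (fun _ => (0 : ℝ)) := by
  intro N1 N2 hN1 hN2
  have hpair1 : Pairwise ((· ⟂ᵢ[μ] ·) on X1) := fun i j hij => hindep1.indepFun hij
  have hpair2 : Pairwise ((· ⟂ᵢ[μ] ·) on X2) := fun i j hij => hindep2.indepFun hij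
  have hae : ∀ᵐ ω ∂μ, Tendsto (fun k => lam1u X1 X2 (N1 k) (N2 k) ω) atTop (𝓝 1) := by
    filter_upwards [ae_tendsto_sampleM (hL2a.integrable one_le_two) hpair1 hident1,
      ae_tendsto_sampleM (hL2b.integrable one_le_two) hpair2 hident2,
      ae_tendsto_sampleV hL2a hpair1 hident1] with ω h1 h2 hV
    exact tendsto_lam1u_of_tendsto (hθ1 ▸ hθ2 ▸ hne) h1 h2 hV hN1 hN2
  have hmeas : ∀ k, AEStronglyMeasurable (lam1u X1 X2 (N1 k) (N2 k)) μ := fun k =>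
    (aemeasurable_lam1u (fun j => (hident1 j).aemeasurable_fst)
      (fun j => (hident2 j).aemeasurable_fst) _ _).aestronglyMeasurable
  refine ⟨tendstoInMeasure_of_tendsto_ae hmeas hae,
    tendstoInMeasure_of_tendsto_ae (fun k => aestronglyMeasurable_const.sub (hmeas k)) ?_⟩
  filter_upwards [hae] with ω h
  simpa using (tendsto_const_nhds (x := (1 : ℝ))).sub h

/-- If `θ₁⁰ ≠ θ₂⁰`, then `λ₁^{opt} → 1` and `λ₂^{opt} → 0` in probability along any
sequence of pairs `(n₁, n₂)` with both sample sizes tending to infinity. -/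
theorem stmt_11 {Ω : Type*} [MeasurableSpace Ω] (μ : Measure Ω) [IsProbabilityMeasure μ]
    (X1 X2 : ℕ → Ω → ℝ)
    (hmeas1 : ∀ j, Measurable (X1 j)) (hmeas2 : ∀ j, Measurable (X2 j))
    (hindep1 : iIndepFun X1 μ)
    (hindep2 : iIndepFun X2 μ)
    (hident1 : ∀ j, IdentDistrib (X1 j) (X1 0) μ μ)
    (hident2 : ∀ j, IdentDistrib (X2 j) (X2 0) μ μ)
    (hindep12 : IndepFun (fun ω => fun j => X1 j ω) (fun ω => fun j => X2 j ω) μ)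
    (hL2a : MemLp (X1 0) 2 μ) (hL2b : MemLp (X2 0) 2 μ)
    (θ1 θ2 : ℝ) (hθ1 : θ1 = ∫ ω, X1 0 ω ∂μ) (hθ2 : θ2 = ∫ ω, X2 0 ω ∂μ)
    (hne : θ1 ≠ θ2) :
    ∀ N1 N2 : ℕ → ℕ, Tendsto N1 atTop atTop → Tendsto N2 atTop atTop →
      TendstoInMeasure μ (fun k => lam1u X1 X2 (N1 k) (N2 k)) atTop (fun _ => (1 : ℝ))
      ∧ TendstoInMeasure μ (fun k ω => 1 - lam1u X1 X2 (N1 k) (N2 k) ω) atTop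
          (fun _ => (0 : ℝ)) :=
  stmt_11_general μ X1 X2 hindep1 hindep2 hident1 hident2 hL2a hL2b θ1 θ2 hθ1 hθ2 hne
end

section
/- If μ₁ ≠ μ₂ and, for each n ≥ 2, λ₂*(n) is a measurable minimizer over λ₂ ∈ [−1,1] of the cross-validation discrepancy D_n(λ₂) = ∑_{j=1}^n (X_{1j} − exp(Ȳ₁^{(−j)} + λ₂(Ȳ₂^{(−j)} − Ȳ₁^{(−j)}) + 1/2))², then λ₂*(n) → 0 in probability as n → ∞; equivalently, the cross-validated weight vector λ^{(cv)}(n) = (1 − λ₂*(n), λ₂*(n)) converges in probability to w₀ = (1,0). -/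
/-!
By the strong law of large numbers the leave-one-out means converge to `μ₁`, `μ₂` uniformly in
the deleted index (a single summand is `o(n)`), so the plug-in predictions converge, uniformly in
`λ₂ ∈ [-1, 1]`, to `c(λ₂) = exp(μ₁ + λ₂(μ₂ - μ₁) + 1/2)`. Up to `o(n)` errors,
`D_n(λ₂) - D_n(0) = n ((c(λ₂) - c(0))² - 2 (c(λ₂) - c(0)) (X̄₁ - c(0)))`, and `X̄₁ → E X₁ = c(0)`.
Since a minimizer satisfies `D_n(λ₂*) ≤ D_n(0)`, this forces `c(λ₂*) → c(0)`, and as `c` is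
injective when `μ₁ ≠ μ₂`, `λ₂* → 0` almost surely, hence in probability.
-/

open MeasureTheory ProbabilityTheory Filter

/-- The log-normal cross-validation discrepancy
`D_n(λ₂) = ∑ⱼ (X_{1j} − exp(Ȳ₁^{(−j)} + λ₂(Ȳ₂^{(−j)} − Ȳ₁^{(−j)}) + 1/2))²`,
where `X_{1j} = exp(Y_{1j})`. -/
noncomputable def Dln {Ω : Type*} (Y1 Y2 : ℕ → Ω → ℝ) (n : ℕ) (t : ℝ) (ω : Ω) : ℝ :=
  ∑ j ∈ Finset.range n,
    (Real.exp (Y1 j ω)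
      - Real.exp (looM Y1 n j ω + t * (looM Y2 n j ω - looM Y1 n j ω) + 1 / 2)) ^ 2

open Finset Topology Real
open scoped NNReal

lemma tendsto_sub_div_succ_of_tendsto_avg {y : ℕ → ℝ} {L : ℝ}
    (h : Tendsto (fun n => (∑ k ∈ range n, y k) / n) atTop (𝓝 L)) :
    Tendsto (fun n => (y n - L) / (n + 1)) atTop (𝓝 0) := by
  have hsucc : Tendsto (fun n : ℕ => (∑ k ∈ range (n + 1), y k) / (n + 1)) atTop (𝓝 L) := by
    simpa using (tendsto_add_atTop_iff_nat 1).2 h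
  have hlim := (hsucc.sub_const L).sub
    ((tendsto_natCast_div_add_atTop (1 : ℝ)).mul (h.sub_const L))
  rw [sub_self, one_mul, sub_self] at hlim
  refine hlim.congr fun n => ?_
  rcases n.eq_zero_or_pos with rfl | hn
  · simp
  · rw [sum_range_succ]
    field_simp
    ring

lemma eventually_forall_lt_abs_le_mul {u : ℕ → ℝ}
    (h : Tendsto (fun n => u n / (n + 1)) atTop (𝓝 0)) {δ : ℝ} (hδ : 0 < δ) :
    ∀ᶠ n : ℕ in atTop, ∀ j < n, |u j| ≤ δ * n := by
  obtain ⟨N, hN⟩ := eventually_atTop.1 (h.abs.eventually (ge_mem_nhds (by simpa using hδ)))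
  obtain ⟨M, hM⟩ := exists_nat_ge ((∑ j ∈ range N, |u j|) / δ)
  filter_upwards [eventually_ge_atTop M] with n hn j hj
  rcases lt_or_ge j N with hjN | hjN
  · calc |u j| ≤ ∑ j ∈ range N, |u j| :=
          single_le_sum (fun i _ => abs_nonneg (u i)) (mem_range.2 hjN)
      _ ≤ δ * M := by rwa [div_le_iff₀ hδ, mul_comm] at hM
      _ ≤ δ * n := by gcongr
  · have hj' := hN j hjN
    rw [abs_div, abs_of_pos (by positivity : (0 : ℝ) < j + 1), div_le_iff₀ (by positivity)] at hj'
    have : (j : ℝ) + 1 ≤ n := by exact_mod_cast hj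
    nlinarith

lemma eventually_forall_lt_abs_looM_sub_le {Ω : Type*} (Y : ℕ → Ω → ℝ) (ω : Ω) {L θ : ℝ}
    (hθ : 0 < θ) (h : Tendsto (fun n => (∑ k ∈ range n, Y k ω) / n) atTop (𝓝 L)) :
    ∀ᶠ n : ℕ in atTop, ∀ j < n, |looM Y n j ω - L| ≤ θ := by
  filter_upwards [eventually_forall_lt_abs_le_mul (tendsto_sub_div_succ_of_tendsto_avg h)
      (by positivity : 0 < θ / 4),
    h.eventually (Metric.closedBall_mem_nhds L (by positivity : 0 < θ / 4)),
    eventually_ge_atTop 2] with n hy hS hn j hj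
  have hn' : (2 : ℝ) ≤ n := by exact_mod_cast hn
  have hn1 : (0 : ℝ) < n - 1 := by linarith
  have hsplit : looM Y n j ω - L
      = n / (n - 1) * ((∑ k ∈ range n, Y k ω) / n - L) - (Y j ω - L) / (n - 1) := by
    rw [looM, sum_erase_eq_sub (mem_range.2 hj)]
    field_simp
    ring
  rw [Real.dist_eq] at hS
  have hmean : |n / (n - 1) * ((∑ k ∈ range n, Y k ω) / n - L)| ≤ θ / 2 := by
    have : (n : ℝ) / (n - 1) ≤ 2 := by rw [div_le_iff₀ hn1]; linarith
    rw [abs_mul, abs_of_pos (by positivity)]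
    nlinarith [abs_nonneg ((∑ k ∈ range n, Y k ω) / n - L)]
  have hterm : |(Y j ω - L) / (n - 1)| ≤ θ / 2 := by
    rw [abs_div, abs_of_pos hn1, div_le_iff₀ hn1]
    nlinarith [hy j hj]
  rw [hsplit]
  linarith [abs_sub (n / (n - 1) * ((∑ k ∈ range n, Y k ω) / n - L)) ((Y j ω - L) / (n - 1))]

lemma abs_exp_sub_exp_le_exp_mul {a b B : ℝ} (ha : a ≤ B) (hb : b ≤ B) :
    |exp a - exp b| ≤ exp B * |a - b| := by
  wlog hba : b ≤ a generalizing a b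
  · rw [abs_sub_comm, abs_sub_comm a]
    exact this hb ha (le_of_not_ge hba)
  rw [abs_of_nonneg (sub_nonneg.2 (exp_le_exp.2 hba)), abs_of_nonneg (sub_nonneg.2 hba)]
  have hsub : exp a - exp b ≤ exp a * (a - b) := by
    have := add_one_le_exp (b - a)
    rw [exp_sub, le_div_iff₀ (exp_pos a)] at this
    nlinarith [exp_pos a]
  calc exp a - exp b ≤ exp a * (a - b) := hsub
    _ ≤ exp B * (a - b) := by gcongr

lemma one_sub_exp_neg_abs_le_abs_exp_sub_one (s : ℝ) : 1 - exp (-|s|) ≤ |exp s - 1| := by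
  rcases le_total 0 s with hs | hs
  · rw [abs_of_nonneg hs, abs_of_nonneg (by simpa using hs)]
    nlinarith [exp_pos s, exp_neg s, mul_inv_cancel₀ (exp_pos s).ne', sq_nonneg (exp s - 1)]
  · rw [abs_of_nonpos hs, neg_neg, abs_of_nonpos (by simpa using hs)]
    linarith

lemma abs_sq_sub_sq_le {x e c K ρ : ℝ} (hx : 0 ≤ x) (he : 0 ≤ e) (heK : e ≤ K) (hc : 0 ≤ c)
    (hcK : c ≤ K) (hec : |e - c| ≤ ρ) :
    |(x - e) ^ 2 - (x - c) ^ 2| ≤ 2 * ρ * (x + K) := by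
  have hfactor : (x - e) ^ 2 - (x - c) ^ 2 = (c - e) * (2 * x - e - c) := by ring
  rw [hfactor, abs_mul, abs_sub_comm]
  have : |2 * x - e - c| ≤ 2 * (x + K) := abs_le.2 ⟨by linarith, by linarith⟩
  calc _ ≤ ρ * (2 * (x + K)) := mul_le_mul hec this (abs_nonneg _) ((abs_nonneg _).trans hec)
    _ = 2 * ρ * (x + K) := by ring

-- `Dln` predicts `X_{1j}` by `logNormalMean` of the weighted leave-one-out mean; its population
-- counterpart is `logNormalMean (μ1 + t * (μ2 - μ1))`, and `E X_{1j} = logNormalMean μ1`.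
noncomputable def logNormalMean (m : ℝ) : ℝ := exp (m + 1 / 2)

-- Dominates all predictions once the leave-one-out means are within `1` of `μ1`, `μ2`:
-- the exponent then moves by at most `3`.
noncomputable def cvBound (μ1 μ2 : ℝ) : ℝ := exp (|μ1| + |μ2 - μ1| + 7 / 2)

lemma logNormalMean_pos (m : ℝ) : 0 < logNormalMean m := exp_pos _

lemma one_le_cvBound (μ1 μ2 : ℝ) : 1 ≤ cvBound μ1 μ2 := one_le_exp (by positivity)

lemma logNormalMean_add (m s : ℝ) : logNormalMean (m + s) = logNormalMean m * exp s := by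
  rw [logNormalMean, logNormalMean, ← exp_add]
  ring_nf

lemma abs_logNormalMean_sub_le_and_le_cvBound {μ1 μ2 a b t θ : ℝ} (ha : |a - μ1| ≤ θ)
    (hb : |b - μ2| ≤ θ) (ht : |t| ≤ 1) (hθ : θ ≤ 1) :
    |logNormalMean (a + t * (b - a)) - logNormalMean (μ1 + t * (μ2 - μ1))|
        ≤ 3 * θ * cvBound μ1 μ2 ∧
      logNormalMean (a + t * (b - a)) ≤ cvBound μ1 μ2 := by
  have h1t : |1 - t| ≤ 2 := (abs_sub _ _).trans (by rw [abs_one]; linarith)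
  have hdiff : |(a + t * (b - a) + 1 / 2) - (μ1 + t * (μ2 - μ1) + 1 / 2)| ≤ 3 * θ := by
    have hsplit : (a + t * (b - a) + 1 / 2) - (μ1 + t * (μ2 - μ1) + 1 / 2)
        = (1 - t) * (a - μ1) + t * (b - μ2) := by ring
    rw [hsplit]
    refine (abs_add_le _ _).trans ?_
    rw [abs_mul, abs_mul]
    have hθ0 : 0 ≤ θ := (abs_nonneg _).trans ha
    nlinarith [abs_nonneg (1 - t), abs_nonneg t, abs_nonneg (a - μ1), abs_nonneg (b - μ2)]
  have hlim : μ1 + t * (μ2 - μ1) + 1 / 2 ≤ |μ1| + |μ2 - μ1| + 1 / 2 := by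
    have : t * (μ2 - μ1) ≤ |μ2 - μ1| :=
      (le_abs_self _).trans (by rw [abs_mul]; exact mul_le_of_le_one_left (abs_nonneg _) ht)
    linarith [le_abs_self μ1]
  have hA : a + t * (b - a) + 1 / 2 ≤ |μ1| + |μ2 - μ1| + 7 / 2 := by
    linarith [(abs_le.1 hdiff).2]
  refine ⟨?_, exp_le_exp.2 hA⟩
  calc _ ≤ exp (|μ1| + |μ2 - μ1| + 7 / 2) * (3 * θ) :=
        (abs_exp_sub_exp_le_exp_mul hA (by linarith)).trans
          (mul_le_mul_of_nonneg_left hdiff (exp_pos _).le)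
    _ = 3 * θ * cvBound μ1 μ2 := by rw [cvBound, mul_comm]

lemma le_abs_logNormalMean_sub_of_le_abs {μ1 μ2 ε t : ℝ} (hε : ε ≤ |t|) :
    logNormalMean μ1 * (1 - exp (-(ε * |μ2 - μ1|)))
      ≤ |logNormalMean (μ1 + t * (μ2 - μ1)) - logNormalMean μ1| := by
  have hm := logNormalMean_pos μ1
  rw [logNormalMean_add, ← mul_sub_one, abs_mul, abs_of_pos hm]
  gcongr
  refine le_trans ?_ (one_sub_exp_neg_abs_le_abs_exp_sub_one _)
  gcongr
  rw [abs_mul]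
  gcongr

lemma Dln_sub_Dln_zero_ge {Ω : Type*} (Y1 Y2 : ℕ → Ω → ℝ) (ω : Ω) {n : ℕ} (hn : 0 < n)
    {μ1 μ2 θ t : ℝ} (hθ : θ ≤ 1) (ht : |t| ≤ 1)
    (h1 : ∀ j < n, |looM Y1 n j ω - μ1| ≤ θ) (h2 : ∀ j < n, |looM Y2 n j ω - μ2| ≤ θ)
    (hX : |(∑ j ∈ range n, exp (Y1 j ω)) / n - logNormalMean μ1| ≤ θ) :
    n * ((logNormalMean (μ1 + t * (μ2 - μ1)) - logNormalMean μ1) ^ 2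
        - θ * (38 * cvBound μ1 μ2 ^ 2))
      ≤ Dln Y1 Y2 n t ω - Dln Y1 Y2 n 0 ω := by
  set K := cvBound μ1 μ2
  set m := logNormalMean μ1
  set c := logNormalMean (μ1 + t * (μ2 - μ1))
  have hθ0 : 0 ≤ θ := (abs_nonneg _).trans (h1 0 hn)
  have hK : 1 ≤ K := one_le_cvBound μ1 μ2
  have hcK : c ≤ K :=
    (abs_logNormalMean_sub_le_and_le_cvBound (a := μ1) (b := μ2) (by simp) (by simp) ht
      zero_le_one).2
  have hmK : m ≤ K := by
    simpa using (abs_logNormalMean_sub_le_and_le_cvBound (a := μ1) (b := μ2) (t := 0)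
      (by simp) (by simp) (by simp) zero_le_one).2
  have hterm : ∀ j ∈ range n,
      (m - c) * 2 * exp (Y1 j ω) - (m - c) * (m + c) - 12 * θ * K * (exp (Y1 j ω) + K)
        ≤ (exp (Y1 j ω) - logNormalMean (looM Y1 n j ω + t * (looM Y2 n j ω - looM Y1 n j ω))) ^ 2
          - (exp (Y1 j ω)
            - logNormalMean (looM Y1 n j ω + 0 * (looM Y2 n j ω - looM Y1 n j ω))) ^ 2 := by
    intro j hj
    have hj := mem_range.1 hj
    obtain ⟨hct, hctK⟩ := abs_logNormalMean_sub_le_and_le_cvBound (h1 j hj) (h2 j hj) ht hθ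
    obtain ⟨hm0, hm0K⟩ :=
      abs_logNormalMean_sub_le_and_le_cvBound (t := 0) (h1 j hj) (h2 j hj) (by simp) hθ
    simp only [zero_mul, add_zero] at hm0 hm0K ⊢
    have et := abs_le.1 (abs_sq_sub_sq_le (exp_pos (Y1 j ω)).le (logNormalMean_pos _).le hctK
      (logNormalMean_pos _).le hcK hct)
    have e0 := abs_le.1 (abs_sq_sub_sq_le (exp_pos (Y1 j ω)).le (logNormalMean_pos _).le hm0K
      (logNormalMean_pos _).le hmK hm0)
    linarith
  have hsum := sum_le_sum hterm
  rw [sum_sub_distrib, sum_sub_distrib, sum_sub_distrib, ← sum_mul, ← mul_sum, sum_const,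
    card_range, nsmul_eq_mul, ← mul_sum, sum_add_distrib, sum_const, card_range, nsmul_eq_mul]
    at hsum
  obtain ⟨x, hxS, hX⟩ : ∃ x, ∑ j ∈ range n, exp (Y1 j ω) = n * x ∧ |x - m| ≤ θ :=
    ⟨_, by field_simp, hX⟩
  rw [hxS] at hsum
  have hcm : |c - m| ≤ K :=
    abs_sub_le_iff.2 ⟨by linarith [logNormalMean_pos μ1],
      by linarith [logNormalMean_pos (μ1 + t * (μ2 - μ1))]⟩
  have hcross : |(c - m) * (x - m)| ≤ K * θ := by
    rw [abs_mul]; exact mul_le_mul hcm hX (abs_nonneg _) (by linarith)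
  have hx : x + K ≤ 3 * K := by linarith [(abs_le.1 hX).2]
  have hpen : 12 * θ * K * (x + K) ≤ 12 * θ * K * (3 * K) := by gcongr
  -- `38 K² = 2 K² + 36 K²` absorbs the cross term `2 (c - m) (x - m)` and the penalty.
  have hbound : (c - m) ^ 2 - θ * (38 * K ^ 2)
      ≤ (m - c) * 2 * x - (m - c) * (m + c) - 12 * θ * K * (x + K) := by
    have hKθ : K * θ ≤ K ^ 2 * θ := by gcongr; nlinarith
    linarith [(abs_le.1 hcross).2]
  calc n * ((c - m) ^ 2 - θ * (38 * K ^ 2))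
      ≤ n * ((m - c) * 2 * x - (m - c) * (m + c) - 12 * θ * K * (x + K)) := by gcongr
    _ ≤ Dln Y1 Y2 n t ω - Dln Y1 Y2 n 0 ω := by
      rw [Dln, Dln]; simp only [logNormalMean] at hsum; linarith

theorem tendsto_zero_of_Dln_le_Dln_zero {Ω : Type*} (Y1 Y2 : ℕ → Ω → ℝ) (ω : Ω) {μ1 μ2 : ℝ}
    (hne : μ1 ≠ μ2)
    (h1 : Tendsto (fun n => (∑ k ∈ range n, Y1 k ω) / n) atTop (𝓝 μ1))
    (h2 : Tendsto (fun n => (∑ k ∈ range n, Y2 k ω) / n) atTop (𝓝 μ2))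
    (hX : Tendsto (fun n => (∑ k ∈ range n, exp (Y1 k ω)) / n) atTop (𝓝 (logNormalMean μ1)))
    {t : ℕ → ℝ} (ht : ∀ᶠ n in atTop, |t n| ≤ 1 ∧ Dln Y1 Y2 n (t n) ω ≤ Dln Y1 Y2 n 0 ω) :
    Tendsto t atTop (𝓝 0) := by
  rw [NormedAddGroup.tendsto_nhds_zero]
  intro ε hε
  set C := 38 * cvBound μ1 μ2 ^ 2
  set κ := logNormalMean μ1 * (1 - exp (-(ε * |μ2 - μ1|)))
  have hC : 0 < C := by have := one_le_cvBound μ1 μ2; simp only [C]; positivity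
  have hκ : 0 < κ := mul_pos (logNormalMean_pos μ1) (sub_pos.2 (exp_lt_one_iff.2
    (neg_lt_zero.2 (mul_pos hε (abs_pos.2 (sub_ne_zero.2 hne.symm))))))
  set θ := min 1 (κ ^ 2 / (2 * C))
  have hθ : 0 < θ := lt_min one_pos (by positivity)
  have hθC : θ * C < κ ^ 2 := by
    calc θ * C ≤ κ ^ 2 / (2 * C) * C := by gcongr; exact min_le_right _ _
      _ < κ ^ 2 := by field_simp; nlinarith
  filter_upwards [eventually_forall_lt_abs_looM_sub_le Y1 ω hθ h1,
    eventually_forall_lt_abs_looM_sub_le Y2 ω hθ h2,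
    hX.eventually (Metric.closedBall_mem_nhds _ hθ), ht, eventually_gt_atTop 0]
    with n hY1 hY2 hXn ⟨htn, hmin⟩ hn
  rw [Real.norm_eq_abs]
  by_contra! hfar
  have hlower := Dln_sub_Dln_zero_ge Y1 Y2 ω hn (min_le_left _ _) htn hY1 hY2 hXn
  have hmargin := pow_le_pow_left₀ hκ.le (le_abs_logNormalMean_sub_of_le_abs (μ2 := μ2) hfar) 2
  rw [sq_abs] at hmargin
  have : (0 : ℝ) < n * ((logNormalMean (μ1 + t n * (μ2 - μ1)) - logNormalMean μ1) ^ 2 - θ * C) :=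
    mul_pos (by exact_mod_cast hn) (by linarith)
  linarith

theorem ae_tendsto_avg_comp_of_map_eq {Ω α : Type*} [MeasurableSpace Ω] [MeasurableSpace α]
    {μ : Measure Ω} {ν : Measure α} (Z : ℕ → Ω → α) (hZ : ∀ j, AEMeasurable (Z j) μ)
    (hindep : Pairwise fun i j => IndepFun (Z i) (Z j) μ) (hlaw : ∀ j, μ.map (Z j) = ν)
    {f : α → ℝ} (hf : Measurable f) (hfν : Integrable f ν) :
    ∀ᵐ ω ∂μ, Tendsto (fun n => (∑ k ∈ range n, f (Z k ω)) / n) atTop (𝓝 (∫ x, f x ∂ν)) := by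
  have hint : Integrable (fun ω => f (Z 0 ω)) μ := by
    rw [← hlaw 0] at hfν
    exact hfν.comp_aemeasurable (hZ 0)
  have hmean : ∫ ω, f (Z 0 ω) ∂μ = ∫ x, f x ∂ν := by
    rw [← hlaw 0, integral_map (hZ 0) hf.aestronglyMeasurable]
  have hident (j : ℕ) : IdentDistrib (fun ω => f (Z j ω)) (fun ω => f (Z 0 ω)) μ μ :=
    IdentDistrib.comp ⟨hZ j, hZ 0, by rw [hlaw j, hlaw 0]⟩ hf
  filter_upwards [strong_law_ae (fun j ω => f (Z j ω)) hint
    (fun i j hij => (hindep hij).comp hf hf) hident] with ω hω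
  rw [hmean] at hω
  simpa [div_eq_inv_mul] using hω

lemma integral_exp_gaussianReal (m : ℝ) (v : ℝ≥0) :
    ∫ x, exp x ∂gaussianReal m v = exp (m + v / 2) := by
  simpa [mgf] using congrFun (mgf_id_gaussianReal (μ := m) (v := v)) 1

/-- For two independent log-normal samples with `μ₁ ≠ μ₂`, any measurable minimizer
`λ₂*(n)` over `[−1,1]` of the cross-validation discrepancy tends to `0` in
probability. -/
theorem stmt_14 {Ω : Type*} [MeasurableSpace Ω] (μ : Measure Ω) [IsProbabilityMeasure μ]
    (μ1 μ2 : ℝ) (hne : μ1 ≠ μ2)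
    (Y : Fin 2 → ℕ → Ω → ℝ)
    (hmeas : ∀ i j, Measurable (Y i j))
    (hindep : iIndepFun (fun p : Fin 2 × ℕ => Y p.1 p.2) μ)
    (hdist1 : ∀ j, Measure.map (Y 0 j) μ = gaussianReal μ1 1)
    (hdist2 : ∀ j, Measure.map (Y 1 j) μ = gaussianReal μ2 1)
    (l2 : ℕ → Ω → ℝ)
    (hml : ∀ n, Measurable (l2 n))
    (hmin : ∀ n, 2 ≤ n → ∀ ω, l2 n ω ∈ Set.Icc (-1 : ℝ) 1
        ∧ ∀ t ∈ Set.Icc (-1 : ℝ) 1, Dln (Y 0) (Y 1) n (l2 n ω) ω ≤ Dln (Y 0) (Y 1) n t ω) :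
    ∀ ε : ℝ, 0 < ε → Tendsto (fun n => μ {ω | ε ≤ |l2 n ω|}) atTop (nhds 0) := by
  have hpair (i : Fin 2) : Pairwise fun j k => IndepFun (Y i j) (Y i k) μ :=
    fun j k hjk => hindep.indepFun (i := (i, j)) (j := (i, k)) (by simp [hjk])
  have hlln (i : Fin 2) {m : ℝ} (hlaw : ∀ j, μ.map (Y i j) = gaussianReal m 1) {f : ℝ → ℝ}
      (hf : Measurable f) (hfν : Integrable f (gaussianReal m 1)) :=
    ae_tendsto_avg_comp_of_map_eq (Y i) (fun j => (hmeas i j).aemeasurable) (hpair i) hlaw hf hfν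
  have hY1 := hlln 0 hdist1 measurable_id ((memLp_id_gaussianReal 1).integrable le_rfl)
  have hY2 := hlln 1 hdist2 measurable_id ((memLp_id_gaussianReal 1).integrable le_rfl)
  have hX1 := hlln 0 hdist1 measurable_exp (by simpa using integrable_exp_mul_gaussianReal 1)
  simp only [id, integral_id_gaussianReal, integral_exp_gaussianReal, NNReal.coe_one]
    at hY1 hY2 hX1
  have hae : ∀ᵐ ω ∂μ, Tendsto (fun n => l2 n ω) atTop (𝓝 0) := by
    filter_upwards [hY1, hY2, hX1] with ω h1 h2 hX
    refine tendsto_zero_of_Dln_le_Dln_zero (Y 0) (Y 1) ω hne h1 h2 hX ?_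
    filter_upwards [eventually_ge_atTop 2] with n hn
    obtain ⟨hl2, hle⟩ := hmin n hn ω
    exact ⟨abs_le.2 hl2, hle 0 ⟨by norm_num, by norm_num⟩⟩
  intro ε hε
  simpa using tendstoInMeasure_iff_norm.1
    (tendstoInMeasure_of_tendsto_ae (fun n => (hml n).aestronglyMeasurable) hae) ε hε
end

section
/- (Verification of consistency condition (iii) for the log-normal family.) There exists a constant 0 < K < ∞ such that P( (1/n)∑_{j=1}^n (X_j − φ(μ̂^{(−j)}))² < K ) → 1 as n → ∞; that is, the average squared leave-one-out prediction error is bounded in probability. -/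
/-! Jensen's inequality for `exp` bounds `exp (2 μ̂^{(−j)})` by `(n − 1)⁻¹ ∑ₖ e^{2Yₖ}`, so the
average squared leave-one-out error is at most a constant times `n⁻¹ ∑ₖ e^{2Yₖ}`. By the strong
law of large numbers the latter converges almost surely to the finite limit `E e^{2Y₀}`, hence
it eventually stays below `E e^{2Y₀} + 1` almost surely. -/

open MeasureTheory ProbabilityTheory Filter

open Real Finset

lemma exp_two_mul_looM_le {Ω : Type*} (Y : ℕ → Ω → ℝ) {n j : ℕ} (hn : 2 ≤ n)
    (hj : j ∈ range n) (ω : Ω) :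
    exp (2 * looM Y n j ω) ≤ (∑ k ∈ range n, exp (2 * Y k ω)) / (n - 1) := by
  have hn1 : (0 : ℝ) < n - 1 := by
    have : (2 : ℝ) ≤ n := by exact_mod_cast hn
    linarith
  have hcard : (((range n).erase j).card : ℝ) = n - 1 := by
    rw [card_erase_of_mem hj, card_range, Nat.cast_sub (by omega), Nat.cast_one]
  have hjensen := convexOn_exp.map_sum_le (t := (range n).erase j)
    (w := fun _ => 1 / ((n : ℝ) - 1)) (p := fun k => 2 * Y k ω) (fun _ _ => by positivity)
    (by rw [sum_const, nsmul_eq_mul, hcard]; field_simp) (fun _ _ => Set.mem_univ _)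
  simp only [smul_eq_mul] at hjensen
  calc exp (2 * looM Y n j ω)
      = exp (∑ k ∈ (range n).erase j, 1 / ((n : ℝ) - 1) * (2 * Y k ω)) := by
        rw [looM, ← mul_sum, ← mul_sum]; ring_nf
    _ ≤ ∑ k ∈ (range n).erase j, 1 / ((n : ℝ) - 1) * exp (2 * Y k ω) := hjensen
    _ ≤ 1 / ((n : ℝ) - 1) * ∑ k ∈ range n, exp (2 * Y k ω) := by
        rw [← mul_sum]
        exact mul_le_mul_of_nonneg_left (sum_le_sum_of_subset_of_nonneg (erase_subset j _)
          fun _ _ _ => (exp_pos _).le) (by positivity)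
    _ = (∑ k ∈ range n, exp (2 * Y k ω)) / (n - 1) := one_div_mul_eq_div _ _

lemma sq_exp_sub_exp_add_half_le (x y : ℝ) :
    (exp x - exp (y + 1 / 2)) ^ 2 ≤ 2 * exp (2 * x) + 2 * exp 1 * exp (2 * y) := by
  have hx : exp x ^ 2 = exp (2 * x) := by rw [← exp_nat_mul]; norm_num
  have hy : exp (y + 1 / 2) ^ 2 = exp 1 * exp (2 * y) := by
    rw [← exp_nat_mul, ← exp_add]; ring_nf
  nlinarith [sq_nonneg (exp x + exp (y + 1 / 2))]

lemma mean_sq_exp_sub_exp_looM_le {Ω : Type*} (Y : ℕ → Ω → ℝ) {n : ℕ} (hn : 2 ≤ n) (ω : Ω) :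
    (1 / (n : ℝ)) * ∑ j ∈ range n, (exp (Y j ω) - exp (looM Y n j ω + 1 / 2)) ^ 2 ≤
      (2 + 4 * exp 1) * ((∑ k ∈ range n, exp (2 * Y k ω)) / n) := by
  set S := ∑ k ∈ range n, exp (2 * Y k ω)
  have hS : 0 ≤ S := sum_nonneg fun _ _ => (exp_pos _).le
  have hn2 : (2 : ℝ) ≤ n := by exact_mod_cast hn
  have hterm : ∀ j ∈ range n, (exp (Y j ω) - exp (looM Y n j ω + 1 / 2)) ^ 2 ≤
      2 * exp (2 * Y j ω) + 2 * exp 1 * (S / (n - 1)) := fun j hj =>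
    (sq_exp_sub_exp_add_half_le _ _).trans <| by
      gcongr; exact exp_two_mul_looM_le Y hn hj ω
  have hsum := sum_le_sum hterm
  rw [sum_add_distrib, ← mul_sum, sum_const, card_range, nsmul_eq_mul] at hsum
  have hinv : S / ((n : ℝ) - 1) ≤ 2 * (S / n) := by
    rw [div_le_iff₀ (by linarith), show 2 * (S / n) * (n - 1) = S + S * (n - 2) / n by
      field_simp; ring]
    exact le_add_of_nonneg_right (div_nonneg (mul_nonneg hS (by linarith)) (by linarith))
  calc (1 / (n : ℝ)) * ∑ j ∈ range n, (exp (Y j ω) - exp (looM Y n j ω + 1 / 2)) ^ 2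
      ≤ (1 / (n : ℝ)) * (2 * S + n * (2 * exp 1 * (S / (n - 1)))) := by gcongr
    _ = 2 * (S / n) + 2 * exp 1 * (S / (n - 1)) := by field_simp
    _ ≤ 2 * (S / n) + 2 * exp 1 * (2 * (S / n)) := by gcongr
    _ = (2 + 4 * exp 1) * (S / n) := by ring

lemma strong_law_ae_real_comp {Ω : Type*} [MeasurableSpace Ω] {μ : Measure Ω}
    {ν : Measure ℝ} {Y : ℕ → Ω → ℝ} (hmeas : ∀ k, Measurable (Y k)) (hindep : iIndepFun Y μ)
    (hdist : ∀ k, Measure.map (Y k) μ = ν) {g : ℝ → ℝ} (hg : Measurable g)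
    (hgint : Integrable g ν) :
    ∀ᵐ ω ∂μ, Tendsto (fun n : ℕ => (∑ i ∈ range n, g (Y i ω)) / n) atTop
      (nhds (∫ x, g x ∂ν)) := by
  have hint : Integrable (fun ω => g (Y 0 ω)) μ := by
    rw [← hdist 0] at hgint
    exact (integrable_map_measure hg.aestronglyMeasurable (hmeas 0).aemeasurable).mp hgint
  have hlim : ∫ ω, g (Y 0 ω) ∂μ = ∫ x, g x ∂ν := by
    rw [← hdist 0, integral_map (hmeas 0).aemeasurable hg.aestronglyMeasurable]
  rw [← hlim]
  exact strong_law_ae_real (fun i ω => g (Y i ω)) hint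
    (fun i j hij => (hindep.indepFun hij).comp hg hg)
    (fun i => IdentDistrib.comp
      ⟨(hmeas i).aemeasurable, (hmeas 0).aemeasurable, by rw [hdist i, hdist 0]⟩ hg)

/-- For i.i.d. log-normal data `X_j = e^{Y_j}`, the average squared leave-one-out
prediction error `(1/n)∑ⱼ (X_j − φ(μ̂^{(−j)}))²`, `φ(t) = e^{t+1/2}`, is bounded
in probability: there is `0 < K < ∞` with
`P((1/n)∑ⱼ (X_j − φ(μ̂^{(−j)}))² < K) → 1`. -/
theorem stmt_18 {Ω : Type*} [MeasurableSpace Ω] (μ : Measure Ω) [IsProbabilityMeasure μ]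
    (μ0 : ℝ) (Y : ℕ → Ω → ℝ) (hmeas : ∀ k, Measurable (Y k))
    (hindep : iIndepFun Y μ)
    (hdist : ∀ k, Measure.map (Y k) μ = gaussianReal μ0 1) :
    ∃ K : ℝ, 0 < K ∧
      Tendsto (fun n : ℕ => μ {ω |
          (1 / (n : ℝ)) * ∑ j ∈ Finset.range n,
              (Real.exp (Y j ω) - Real.exp (looM Y n j ω + 1 / 2)) ^ 2 < K})
        atTop (nhds 1) := by
  set a := ∫ x, exp (2 * x) ∂gaussianReal μ0 1
  have ha : 0 ≤ a := integral_nonneg fun _ => (exp_pos _).le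
  have hslln := strong_law_ae_real_comp hmeas hindep hdist (by fun_prop)
    (integrable_exp_mul_gaussianReal 2)
  refine ⟨(2 + 4 * exp 1) * (a + 1), by positivity, ?_⟩
  rw [← measure_univ (μ := μ)]
  refine tendsto_measure_of_ae_tendsto_indicator_of_isFiniteMeasure atTop MeasurableSet.univ
    (fun n => measurableSet_lt (by unfold looM; fun_prop) measurable_const) ?_
  filter_upwards [hslln] with ω hω
  filter_upwards [hω.eventually_lt_const (lt_add_one a), eventually_ge_atTop 2] with n hn h2
  simp only [Set.mem_univ, iff_true]
  exact (mean_sq_exp_sub_exp_looM_le Y h2 ω).trans_lt (by gcongr)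
end

section
/- The average of the squared leave-one-out predictions converges: I₃ⁿ := (1/n)∑_{j=1}^n φ(μ̂^{(−j)})² = (1/n)∑_{j=1}^n exp( (2/(n−1))∑_{k≤n, k≠j} Y_k + 1 ) → e^{2μ+1} in probability as n → ∞. -/
open MeasureTheory ProbabilityTheory Filter
open Finset Real Topology

/-!
With `S = ∑_{k<n} Y_k`, the `j`-th summand factors as `exp (2S/(n-1) + 1) * exp (-2Y_j/(n-1))`.
The strong law gives `2S/(n-1) → 2μ` almost surely. Since `|e^a - 1| ≤ |a| e^{|a|}`, the average of
`exp (-2Y_j/(n-1)) - 1` is at most `(1/n) (2T/(n-1)) exp (2T/(n-1))` with `T = ∑_{k<n} |Y_k|`,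
and the strong law for `|Y_k|` keeps `2T/(n-1)` bounded, so this error tends to `0` almost surely.
Almost sure convergence implies convergence in probability.
-/

theorem abs_exp_sub_one_le_abs_mul_exp_abs (a : ℝ) : |exp a - 1| ≤ |a| * exp |a| := by
  rcases le_or_gt 0 a with ha | ha
  · rw [abs_of_nonneg ha, abs_of_nonneg (by simpa using one_le_exp ha)]
    have : exp (-a) * exp a = 1 := by rw [← exp_add, neg_add_cancel, exp_zero]
    nlinarith [one_sub_le_exp_neg a, exp_pos a]
  · rw [abs_of_neg ha, abs_of_nonpos (by simpa using exp_le_one_iff.mpr ha.le)]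
    nlinarith [add_one_le_exp a, one_le_exp (neg_nonneg.mpr ha.le)]

theorem abs_sum_exp_sub_one_le {ι : Type*} (s : Finset ι) (x : ι → ℝ) :
    |∑ j ∈ s, (exp (x j) - 1)| ≤ (∑ j ∈ s, |x j|) * exp (∑ j ∈ s, |x j|) := by
  calc |∑ j ∈ s, (exp (x j) - 1)| ≤ ∑ j ∈ s, |exp (x j) - 1| := abs_sum_le_sum_abs _ _
    _ ≤ ∑ j ∈ s, |x j| * exp (∑ j ∈ s, |x j|) := by
        gcongr with j hj
        refine (abs_exp_sub_one_le_abs_mul_exp_abs _).trans ?_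
        gcongr
        exact single_le_sum (fun i _ => abs_nonneg (x i)) hj
    _ = (∑ j ∈ s, |x j|) * exp (∑ j ∈ s, |x j|) := (sum_mul ..).symm

theorem sum_exp_mul_sum_erase_add {ι : Type*} [DecidableEq ι] (s : Finset ι) (y : ι → ℝ)
    (r c : ℝ) :
    ∑ j ∈ s, exp (r * ∑ k ∈ s.erase j, y k + c)
      = exp (r * ∑ k ∈ s, y k + c) * ∑ j ∈ s, exp (-(r * y j)) := by
  rw [mul_sum]
  refine sum_congr rfl fun j hj => ?_
  rw [sum_erase_eq_sub hj, ← exp_add]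
  ring_nf

theorem tendsto_div_natCast_sub_one_mul_sum (c : ℝ) {z : ℕ → ℝ} {a : ℝ}
    (h : Tendsto (fun n : ℕ => (∑ j ∈ range n, z j) / n) atTop (𝓝 a)) :
    Tendsto (fun n : ℕ => c / ((n : ℝ) - 1) * ∑ j ∈ range n, z j) atTop (𝓝 (c * a)) := by
  have hq : Tendsto (fun n : ℕ => (n : ℝ) / ((n : ℝ) - 1)) atTop (𝓝 1) := by
    simpa [sub_eq_add_neg] using tendsto_natCast_div_add_atTop (-1 : ℝ)
  have := (hq.const_mul c).mul h
  rw [mul_one] at this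
  refine this.congr' ?_
  filter_upwards [eventually_ne_atTop 0] with n hn
  field_simp

theorem tendsto_average_exp_sum_erase {y : ℕ → ℝ} {m M : ℝ}
    (hS : Tendsto (fun n : ℕ => (∑ j ∈ range n, y j) / n) atTop (𝓝 m))
    (hT : Tendsto (fun n : ℕ => (∑ j ∈ range n, |y j|) / n) atTop (𝓝 M)) :
    Tendsto (fun n : ℕ => (1 / (n : ℝ)) * ∑ j ∈ range n,
        exp ((2 / ((n : ℝ) - 1)) * ∑ k ∈ (range n).erase j, y k + 1))
      atTop (𝓝 (exp (2 * m + 1))) := by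
  have hrS := tendsto_div_natCast_sub_one_mul_sum 2 hS
  have hrT := tendsto_div_natCast_sub_one_mul_sum 2 hT
  have hE : Tendsto (fun n : ℕ =>
      (1 / (n : ℝ)) * ∑ j ∈ range n, (exp (-(2 / ((n : ℝ) - 1) * y j)) - 1)) atTop (𝓝 0) := by
    have hbound := (tendsto_one_div_atTop_nhds_zero_nat.mul hrT).mul
      ((continuous_exp.tendsto _).comp hrT)
    rw [zero_mul, zero_mul] at hbound
    refine squeeze_zero_norm' ?_ hbound
    filter_upwards [eventually_ge_atTop 2] with n hn
    have hr : 0 ≤ 2 / ((n : ℝ) - 1) := div_nonneg zero_le_two (by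
      rw [sub_nonneg, Nat.one_le_cast]; omega)
    have hsum : ∑ j ∈ range n, |-(2 / ((n : ℝ) - 1) * y j)|
        = 2 / ((n : ℝ) - 1) * ∑ j ∈ range n, |y j| := by
      simp only [abs_neg, abs_mul, mul_sum, abs_of_nonneg hr]
    rw [norm_mul, Real.norm_eq_abs, Real.norm_eq_abs, abs_of_nonneg (by positivity), mul_assoc,
      Function.comp_apply]
    gcongr
    simpa only [hsum] using abs_sum_exp_sub_one_le (range n) fun j => -(2 / ((n : ℝ) - 1) * y j)
  have := ((continuous_exp.tendsto _).comp (hrS.add_const 1)).mul (hE.const_add 1)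
  rw [add_zero, mul_one] at this
  refine this.congr' ?_
  filter_upwards [eventually_ne_atTop 0] with n hn
  rw [Function.comp_apply, sum_exp_mul_sum_erase_add, sum_sub_distrib, sum_const, card_range,
    nsmul_eq_mul, mul_one]
  field_simp
  ring

/-- For i.i.d. `N(μ,1)` data, the average of the squared leave-one-out predictions
`I₃ⁿ = (1/n)∑ⱼ exp((2/(n−1))∑_{k≠j} Yₖ + 1)` converges to `e^{2μ+1}` in probability. -/
theorem stmt_19 {Ω : Type*} [MeasurableSpace Ω] (μ : Measure Ω) [IsProbabilityMeasure μ]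
    (μ0 : ℝ) (Y : ℕ → Ω → ℝ) (hmeas : ∀ k, Measurable (Y k))
    (hindep : iIndepFun Y μ)
    (hdist : ∀ k, Measure.map (Y k) μ = gaussianReal μ0 1) :
    ∀ ε : ℝ, 0 < ε →
      Tendsto (fun n : ℕ => μ {ω |
          ε ≤ |(1 / (n : ℝ)) * (∑ j ∈ Finset.range n,
                  Real.exp ((2 / ((n : ℝ) - 1)) * ∑ k ∈ (Finset.range n).erase j, Y k ω + 1))
              - Real.exp (2 * μ0 + 1)|})
        atTop (nhds 0) := by
  intro ε hε
  have hgauss : ∀ k, IdentDistrib (Y k) id μ (gaussianReal μ0 1) := fun k =>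
    ⟨(hmeas k).aemeasurable, aemeasurable_id, by rw [hdist, Measure.map_id]⟩
  have hident : ∀ k, IdentDistrib (Y k) (Y 0) μ μ := fun k => (hgauss k).trans (hgauss 0).symm
  have hint : Integrable (Y 0) μ :=
    (hgauss 0).integrable_iff.mpr ((memLp_id_gaussianReal 1).integrable le_rfl)
  have hmean : μ[Y 0] = μ0 := (hgauss 0).integral_eq.trans integral_id_gaussianReal
  have hS := strong_law_ae_real Y hint (fun i j hij => hindep.indepFun hij) hident
  have hT := strong_law_ae_real (fun k ω => |Y k ω|) hint.abs
    (fun i j hij => (hindep.indepFun hij).comp measurable_abs measurable_abs)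
    (fun k => (hident k).comp measurable_abs)
  have hae : ∀ᵐ ω ∂μ, Tendsto (fun n : ℕ => (1 / (n : ℝ)) * ∑ j ∈ range n,
      exp ((2 / ((n : ℝ) - 1)) * ∑ k ∈ (range n).erase j, Y k ω + 1))
      atTop (𝓝 (exp (2 * μ0 + 1))) := by
    filter_upwards [hS, hT] with ω hSω hTω
    exact tendsto_average_exp_sum_erase (hmean ▸ hSω) hTω
  have hmeasF : ∀ n : ℕ, AEStronglyMeasurable (fun ω => (1 / (n : ℝ)) * ∑ j ∈ range n,
      exp ((2 / ((n : ℝ) - 1)) * ∑ k ∈ (range n).erase j, Y k ω + 1)) μ := fun n => by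
    fun_prop
  simpa only [Real.dist_eq] using
    tendstoInMeasure_iff_dist.mp (tendstoInMeasure_of_tendsto_ae hmeasF hae) ε hε
end
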